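/- arXiv:1912.01656 — 9 statements merged into one kernel-verified Lean document; each statement's English description precedes it below -/
import Mathlib

section
/- Let p be a prime, m ≥ 2, and define a_ℓ = Σ_{k=⌈ℓ/p^{m-1}⌉}^{p-1} C(k p^{m-1}, ℓ). Then p divides a_ℓ for every 1 ≤ ℓ ≤ p^{m-1}(p−1) − 1. -/
/-!
In characteristic `p`, `(∑_{k<p} (x + 1)^k) * x = (x + 1)^p - 1 = x^p`, so `∑_{k<p} (x + 1)^k = x^(p-1)`.
Taking `x = X^q` with `q = p^(m-1)` in `𝔽_p[X]` and using `X^q + 1 = (X + 1)^q` gives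
`∑_{k<p} (X + 1)^(kq) = X^(q(p-1))`, whose coefficient of `X^ℓ` is `∑_{k<p} C(kq, ℓ)`.
The terms with `kq < ℓ`, i.e. `k < ⌈ℓ/q⌉`, vanish.
-/

open Finset Polynomial

section CharP

variable {R : Type*} [CommRing R] (p : ℕ) [Fact p.Prime] [CharP R p]

theorem geom_sum_X_add_one_eq_X_pow_pred :
    ∑ i ∈ range p, (X + 1 : R[X]) ^ i = X ^ (p - 1) := by
  apply (isRegular_X (R := R)).right
  have hp : 1 ≤ p := (Fact.out : p.Prime).one_le
  calc (∑ i ∈ range p, (X + 1 : R[X]) ^ i) * X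
      = (∑ i ∈ range p, (X + 1 : R[X]) ^ i) * X + 1 - 1 := by ring
    _ = X ^ p := by rw [geom_sum_mul_add, add_pow_char, one_pow, add_sub_cancel_right]
    _ = X ^ (p - 1) * X := by rw [← pow_succ, Nat.sub_add_cancel hp]

theorem geom_sum_add_one_eq_pow_pred (x : R) :
    ∑ i ∈ range p, (x + 1) ^ i = x ^ (p - 1) := by
  simpa [eval_finsetSum] using congrArg (eval x) (geom_sum_X_add_one_eq_X_pow_pred (R := R) p)

end CharP

theorem Nat.Prime.dvd_sum_range_choose_mul_prime_pow {p : ℕ} (hp : p.Prime) (n ℓ : ℕ)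
    (hℓ : ℓ < p ^ n * (p - 1)) :
    p ∣ ∑ k ∈ range p, (k * p ^ n).choose ℓ := by
  have : Fact p.Prime := ⟨hp⟩
  have hsum : ∑ k ∈ range p, ((X + 1 : (ZMod p)[X]) ^ p ^ n) ^ k = X ^ (p ^ n * (p - 1)) := by
    rw [add_pow_char_pow, one_pow, geom_sum_add_one_eq_pow_pred, pow_mul]
  have hcoeff := congrArg (coeff · ℓ) hsum
  simp only [finsetSum_coeff, ← pow_mul, coeff_X_add_one_pow, coeff_X_pow,
    if_neg hℓ.ne] at hcoeff
  rw [← ZMod.natCast_eq_zero_iff, Nat.cast_sum, ← hcoeff]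
  simp only [mul_comm]

theorem sum_Icc_ceilDiv_choose_mul_eq_sum_range {q : ℕ} (hq : 0 < q) (n ℓ : ℕ) :
    ∑ k ∈ Icc (ℓ ⌈/⌉ q) n, (k * q).choose ℓ = ∑ k ∈ range (n + 1), (k * q).choose ℓ := by
  refine sum_subset (fun k hk ↦ by simp only [mem_Icc, mem_range] at hk ⊢; omega) ?_
  intro k hk hk'
  have hkq : k * q < ℓ := by
    by_contra! h
    exact hk' (mem_Icc.2 ⟨(ceilDiv_le_iff_le_mul hq).2 (by linarith),
      Nat.lt_succ_iff.1 (mem_range.1 hk)⟩)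
  exact Nat.choose_eq_zero_of_lt hkq

theorem stmt1_general (p m : ℕ) (hp : p.Prime) (ℓ : ℕ)
    (h2 : ℓ ≤ p ^ (m - 1) * (p - 1) - 1) :
    p ∣ ∑ k ∈ Finset.Icc (ℓ ⌈/⌉ p ^ (m - 1)) (p - 1), (k * p ^ (m - 1)).choose ℓ := by
  have hq : 0 < p ^ (m - 1) := pow_pos hp.pos _
  have hℓ : ℓ < p ^ (m - 1) * (p - 1) :=
    lt_of_le_of_lt h2 (Nat.sub_one_lt (Nat.mul_ne_zero hq.ne' (Nat.sub_ne_zero_of_lt hp.one_lt)))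
  rw [sum_Icc_ceilDiv_choose_mul_eq_sum_range hq, Nat.sub_add_cancel hp.one_le]
  exact hp.dvd_sum_range_choose_mul_prime_pow (m - 1) ℓ hℓ

/-- For a prime `p`, `m ≥ 2`, and `a_ℓ = Σ_{k=⌈ℓ/p^{m-1}⌉}^{p-1} C(k p^{m-1}, ℓ)`,
we have `p ∣ a_ℓ` for every `1 ≤ ℓ ≤ p^{m-1}(p-1) - 1`. -/
theorem stmt1 (p m : ℕ) (hp : p.Prime) (hm : 2 ≤ m) (ℓ : ℕ)
    (h1 : 1 ≤ ℓ) (h2 : ℓ ≤ p ^ (m - 1) * (p - 1) - 1) :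
    p ∣ ∑ k ∈ Finset.Icc (ℓ ⌈/⌉ p ^ (m - 1)) (p - 1), (k * p ^ (m - 1)).choose ℓ :=
  stmt1_general p m hp ℓ h2
end

section
/- Let p be a prime, m ≥ 2, 1 ≤ ℓ < (p−2)p^{m-1}, and ⌈ℓ/p^{m-1}⌉ ≤ k ≤ p−1. If ord_p(ℓ) ≤ m−3, then p^2 divides C(k p^{m-1}, ℓ). -/
/-! The identity `n * C(n-1, ℓ-1) = ℓ * C(n, ℓ)` gives `n ∣ ℓ * C(n, ℓ)`, so
`ord_p C(n, ℓ) ≥ ord_p n - ord_p ℓ` whenever `C(n, ℓ) ≠ 0`. For `n = k p^(m-1)` this is at least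
`(m - 1) - (m - 3) = 2`. -/

theorem Nat.dvd_choose_mul_self (n ℓ : ℕ) : n ∣ n.choose ℓ * ℓ := by
  rcases n with _ | n
  · exact zero_dvd_iff.2 (by rcases ℓ with _ | ℓ <;> simp)
  · rcases ℓ with _ | ℓ
    · simp
    · exact ⟨n.choose ℓ, (Nat.add_one_mul_choose_eq n ℓ).symm⟩

theorem Nat.pow_dvd_choose_of_pow_add_padicValNat_dvd {p n ℓ a : ℕ} [Fact p.Prime]
    (hℓ : ℓ ≠ 0) (hn : p ^ (a + padicValNat p ℓ) ∣ n) : p ^ a ∣ n.choose ℓ := by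
  rcases eq_or_ne (n.choose ℓ) 0 with hC | hC
  · simp [hC]
  have hval : a + padicValNat p ℓ ≤ padicValNat p (n.choose ℓ) + padicValNat p ℓ := by
    rw [← padicValNat.mul hC hℓ]
    exact (padicValNat_dvd_iff_le (mul_ne_zero hC hℓ)).1 (hn.trans (n.dvd_choose_mul_self ℓ))
  exact (padicValNat_dvd_iff_le hC).2 (by omega)

theorem stmt3_general (p m : ℕ) (hp : p.Prime) (ℓ k : ℕ)
    (h1 : 1 ≤ ℓ)
    (hord : (padicValNat p ℓ : ℤ) ≤ (m : ℤ) - 3) :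
    p ^ 2 ∣ (k * p ^ (m - 1)).choose ℓ := by
  have : Fact p.Prime := ⟨hp⟩
  refine Nat.pow_dvd_choose_of_pow_add_padicValNat_dvd (by omega) (Dvd.dvd.mul_left ?_ k)
  exact Nat.pow_dvd_pow p (by omega)

/-- For a prime `p`, `m ≥ 2`, `1 ≤ ℓ < (p-2) p^{m-1}`, `⌈ℓ/p^{m-1}⌉ ≤ k ≤ p-1`:
if `ord_p(ℓ) ≤ m - 3` then `p^2 ∣ C(k p^{m-1}, ℓ)`. -/
theorem stmt3 (p m : ℕ) (hp : p.Prime) (hm : 2 ≤ m) (ℓ k : ℕ)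
    (h1 : 1 ≤ ℓ) (h2 : ℓ < (p - 2) * p ^ (m - 1))
    (hk1 : ℓ ⌈/⌉ p ^ (m - 1) ≤ k) (hk2 : k ≤ p - 1)
    (hord : (padicValNat p ℓ : ℤ) ≤ (m : ℤ) - 3) :
    p ^ 2 ∣ (k * p ^ (m - 1)).choose ℓ :=
  stmt3_general p m hp ℓ k h1 hord
end

section
/- Let p be a prime, m ≥ 2, and ℓ = r p^{m-2} with gcd(r, p) = 1 and 1 ≤ ℓ < (p−2)p^{m-1}. Set s = #{j : 1 ≤ j ≤ ℓ−1, ord_p(j) = m−1}. Then for each integer k with s+1 ≤ k ≤ p−1, C(k p^{m-1}, ℓ) ≡ (k p / r) · (−1)^{ℓ−s−1} · Π_{j=1}^{s} (k/j − 1) modulo p^2 ℤ_p. -/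
/-!
Put `n = k p^(m-1)` and expand `C(n, ℓ) = (n / ℓ) ∏_{1 ≤ j < ℓ} (n / j - 1)`. Since `ℓ - 1 < p^m`,
every such `j` has `v_p(j) ≤ m - 1`. If `v_p(j) < m - 1`, then `n / j` is divisible by `p`, so the
factor is `≡ -1 (mod p)`. If `v_p(j) = m - 1`, then `j = t p^(m-1)` with `1 ≤ t ≤ s < p`, and the
factor is exactly `k / t - 1`, a `p`-adic integer; there are `s` such `j`. Finally `n / ℓ = k p / r`
has norm at most `p⁻¹`, which turns the congruence mod `p` of the product into one mod `p²`.
-/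

open Finset

theorem Nat.cast_choose_eq_div_mul_prod {K : Type*} [Field K] [CharZero K] (n : ℕ) {ℓ : ℕ}
    (hℓ : ℓ ≠ 0) :
    (n.choose ℓ : K) = n / ℓ * ∏ j ∈ Icc 1 (ℓ - 1), ((n : K) / j - 1) := by
  obtain ⟨L, rfl⟩ := Nat.exists_eq_add_one_of_ne_zero hℓ
  rw [Nat.add_sub_cancel]
  clear hℓ
  induction L with
  | zero => simp
  | succ L ih =>
    have hrec : (n.choose (L + 2) : K) = n.choose (L + 1) * (n - (L + 1)) / (L + 2) := by
      simp only [Nat.cast_choose_eq_descPochhammer_div, descPochhammer_succ_eval (L + 1),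
        Nat.factorial_succ (L + 1)]
      push_cast
      field_simp
      ring
    rw [hrec, ih, prod_Icc_succ_top (by omega)]
    push_cast
    field_simp
    ring

theorem IsUltrametricDist.norm_prod_sub_prod_le {ι R : Type*} [NormedCommRing R] [NormOneClass R]
    [IsUltrametricDist R] (s : Finset ι) {f g : ι → R} {ε : ℝ} (hε : 0 ≤ ε)
    (hf : ∀ i ∈ s, ‖f i‖ ≤ 1) (hg : ∀ i ∈ s, ‖g i‖ ≤ 1) (hfg : ∀ i ∈ s, ‖f i - g i‖ ≤ ε) :
    ‖∏ i ∈ s, f i - ∏ i ∈ s, g i‖ ≤ ε := by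
  classical
  induction s using Finset.induction_on with
  | empty => simpa using hε
  | insert a s ha ih =>
    simp only [forall_mem_insert] at hf hg hfg
    have hgs : ‖∏ i ∈ s, g i‖ ≤ 1 :=
      (Finset.norm_prod_le _ _).trans (prod_le_one (fun _ _ ↦ norm_nonneg _) hg.2)
    rw [prod_insert ha, prod_insert ha,
      show f a * ∏ i ∈ s, f i - g a * ∏ i ∈ s, g i =
        f a * (∏ i ∈ s, f i - ∏ i ∈ s, g i) + (f a - g a) * ∏ i ∈ s, g i by ring]
    refine (norm_add_le_max _ _).trans (max_le ?_ ?_)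
    · exact (norm_mul_le _ _).trans <| by nlinarith [ih hf.2 hg.2 hfg.2, norm_nonneg (f a)]
    · exact (norm_mul_le _ _).trans <| by nlinarith [hfg.1, norm_nonneg (∏ i ∈ s, g i)]

theorem IsUltrametricDist.norm_sub_one_le_one {R : Type*} [SeminormedRing R] [NormOneClass R]
    [IsUltrametricDist R] {x : R} (hx : ‖x‖ ≤ 1) : ‖x - 1‖ ≤ 1 := by
  simpa [sub_eq_add_neg] using (norm_add_le_max x (-1)).trans (max_le hx (by simp))

theorem Nat.filter_dvd_Icc_eq_image {q : ℕ} (hq : q ≠ 0) (N : ℕ) :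
    {j ∈ Icc 1 N | q ∣ j} = (Icc 1 (N / q)).image (· * q) := by
  ext j
  simp only [mem_filter, mem_Icc, mem_image]
  constructor
  · rintro ⟨⟨hj1, hjN⟩, t, rfl⟩
    refine ⟨t, ⟨Nat.pos_of_ne_zero ?_, (Nat.le_div_iff_mul_le (by omega)).2 ?_⟩, mul_comm _ _⟩
    · rintro rfl; simp at hj1
    · rwa [mul_comm]
  · rintro ⟨t, ⟨ht1, htN⟩, rfl⟩
    refine ⟨⟨Nat.one_le_iff_ne_zero.2 (by positivity), (Nat.le_div_iff_mul_le (by omega)).1 htN⟩,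
      dvd_mul_left _ _⟩

theorem Nat.card_filter_dvd_Icc (q N : ℕ) : #{j ∈ Icc 1 N | q ∣ j} = N / q := by
  simpa [← Finset.Icc_add_one_left_eq_Ioc] using Nat.Ioc_filter_dvd_card_eq_div N q

theorem padicValNat_eq_iff_pow_dvd {p : ℕ} [hp : Fact p.Prime] {e j : ℕ} (hj : j ≠ 0)
    (hjp : j < p ^ (e + 1)) : padicValNat p j = e ↔ p ^ e ∣ j := by
  refine ⟨fun h ↦ h ▸ pow_padicValNat_dvd, fun h ↦ le_antisymm ?_ ((padicValNat_dvd_iff_le hj).1 h)⟩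
  have hlt : p ^ padicValNat p j < p ^ (e + 1) :=
    (Nat.le_of_dvd (Nat.pos_of_ne_zero hj) pow_padicValNat_dvd).trans_lt hjp
  exact Nat.lt_succ_iff.1 ((Nat.pow_lt_pow_iff_right hp.out.one_lt).1 hlt)

theorem filter_padicValNat_eq_eq_filter_pow_dvd {p : ℕ} [Fact p.Prime] {e N : ℕ}
    (hN : N < p ^ (e + 1)) :
    {j ∈ Icc 1 N | padicValNat p j = e} = {j ∈ Icc 1 N | p ^ e ∣ j} :=
  filter_congr fun _ hj ↦ padicValNat_eq_iff_pow_dvd (Nat.one_le_iff_ne_zero.1 (mem_Icc.1 hj).1)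
    ((mem_Icc.1 hj).2.trans_lt hN)

theorem prod_filter_dvd_natCast_div_sub_one {K : Type*} [Field K] [CharZero K] (k : ℕ) {q : ℕ}
    (hq : q ≠ 0) (N : ℕ) :
    ∏ j ∈ Icc 1 N with q ∣ j, (((k * q : ℕ) : K) / j - 1) =
      ∏ t ∈ Icc 1 (N / q), ((k : K) / t - 1) := by
  rw [Nat.filter_dvd_Icc_eq_image hq, prod_image fun _ _ _ _ h ↦ mul_left_injective₀ hq h]
  refine prod_congr rfl fun t _ ↦ ?_
  push_cast
  rw [mul_div_mul_right _ _ (by exact_mod_cast hq)]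

namespace Padic

variable {p : ℕ} [hp : Fact p.Prime]

theorem norm_natCast_div_le_inv {e n j : ℕ} (hn : p ^ (e + 1) ∣ n) (hj : j ≠ 0)
    (hpj : ¬ p ^ (e + 1) ∣ j) : ‖(n : ℚ_[p]) / j‖ ≤ (p : ℝ)⁻¹ := by
  have hp1 : (1 : ℝ) ≤ p := by exact_mod_cast hp.out.one_le
  have hnorm_n : ‖(n : ℚ_[p])‖ ≤ (p : ℝ) ^ (-(e + 1 : ℕ) : ℤ) := by
    exact_mod_cast (norm_int_le_pow_iff_dvd n (e + 1)).2 (by exact_mod_cast hn)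
  have hnorm_j : ‖(j : ℚ_[p])‖ = (p : ℝ) ^ (-(padicValNat p j : ℤ)) := by
    rw [norm_eq_zpow_neg_valuation (by exact_mod_cast hj), valuation_natCast]
  have hv : padicValNat p j ≤ e := by
    rw [padicValNat_dvd_iff_le hj] at hpj
    omega
  rw [norm_div, hnorm_j, div_le_iff₀ (by positivity), ← zpow_neg_one, ← zpow_add₀ (by positivity)]
  exact hnorm_n.trans (zpow_le_zpow_right₀ hp1 (by omega))

theorem norm_prod_natCast_div_sub_one_sub_neg_one_pow_le {e n : ℕ} (hn : p ^ (e + 1) ∣ n)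
    {S : Finset ℕ} (hS : ∀ j ∈ S, j ≠ 0 ∧ ¬ p ^ (e + 1) ∣ j) :
    ‖∏ j ∈ S, ((n : ℚ_[p]) / j - 1) - (-1) ^ #S‖ ≤ (p : ℝ)⁻¹ := by
  have hsmall : ∀ j ∈ S, ‖(n : ℚ_[p]) / j‖ ≤ (p : ℝ)⁻¹ := fun j hj ↦
    norm_natCast_div_le_inv hn (hS j hj).1 (hS j hj).2
  rw [← prod_const]
  refine IsUltrametricDist.norm_prod_sub_prod_le S (by positivity) (fun j hj ↦ ?_)
    (fun _ _ ↦ by simp) (fun j hj ↦ by simpa using hsmall j hj)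
  exact IsUltrametricDist.norm_sub_one_le_one <|
    (hsmall j hj).trans (inv_le_one_of_one_le₀ (by exact_mod_cast hp.out.one_le))

theorem norm_prod_natCast_div_sub_one_le_one (k : ℕ) {N : ℕ} (hN : N < p) :
    ‖∏ t ∈ Icc 1 N, ((k : ℚ_[p]) / t - 1)‖ ≤ 1 := by
  rw [norm_prod]
  refine prod_le_one (fun _ _ ↦ norm_nonneg _) fun t ht ↦ ?_
  have ht1 : ‖(t : ℚ_[p])‖ = 1 := norm_natCast_eq_one_iff.2 <|
    Nat.coprime_of_lt_prime (by grind) (by grind) hp.out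
  refine IsUltrametricDist.norm_sub_one_le_one ?_
  rw [norm_div, ht1, div_one]
  exact IsUltrametricDist.norm_natCast_le_one ℚ_[p] k

theorem norm_cast_choose_mul_pow_sub_le (k : ℕ) {e ℓ : ℕ} (hℓ : ℓ ≠ 0)
    (hℓp : ℓ - 1 < p ^ (e + 2)) :
    ‖((k * p ^ (e + 1)).choose ℓ : ℚ_[p]) -
        ((k * p ^ (e + 1) : ℕ) : ℚ_[p]) / ℓ * (-1) ^ (ℓ - 1 - (ℓ - 1) / p ^ (e + 1)) *
          ∏ t ∈ Icc 1 ((ℓ - 1) / p ^ (e + 1)), ((k : ℚ_[p]) / t - 1)‖ ≤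
      ‖((k * p ^ (e + 1) : ℕ) : ℚ_[p]) / ℓ‖ * (p : ℝ)⁻¹ := by
  set q := p ^ (e + 1)
  set T := (ℓ - 1) / q
  have hq : q ≠ 0 := pow_ne_zero _ hp.out.ne_zero
  have hTp : T < p := Nat.div_lt_of_lt_mul (by rwa [← pow_succ])
  have hcard : #{j ∈ Icc 1 (ℓ - 1) | ¬ q ∣ j} = ℓ - 1 - T := by
    have := card_filter_add_card_filter_not (s := Icc 1 (ℓ - 1)) (p := (q ∣ ·))
    rw [Nat.card_filter_dvd_Icc, Nat.card_Icc] at this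
    omega
  set B := ∏ t ∈ Icc 1 T, ((k : ℚ_[p]) / t - 1)
  set A := ∏ j ∈ Icc 1 (ℓ - 1) with ¬ q ∣ j, (((k * q : ℕ) : ℚ_[p]) / j - 1)
  have hsplit : ((k * q).choose ℓ : ℚ_[p]) = (k * q : ℕ) / ℓ * (B * A) := by
    rw [Nat.cast_choose_eq_div_mul_prod _ hℓ, ← prod_filter_mul_prod_filter_not _ (q ∣ ·),
      prod_filter_dvd_natCast_div_sub_one _ hq]
  have hA : ‖A - (-1) ^ (ℓ - 1 - T)‖ ≤ (p : ℝ)⁻¹ :=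
    hcard ▸ norm_prod_natCast_div_sub_one_sub_neg_one_pow_le (dvd_mul_left q k) (by grind)
  have hB : ‖B‖ ≤ 1 := norm_prod_natCast_div_sub_one_le_one k hTp
  calc _ = ‖((k * q : ℕ) : ℚ_[p]) / ℓ‖ * ‖B‖ * ‖A - (-1) ^ (ℓ - 1 - T)‖ := by
        rw [hsplit, ← norm_mul, ← norm_mul]
        congr 1
        ring
    _ ≤ ‖((k * q : ℕ) : ℚ_[p]) / ℓ‖ * 1 * (p : ℝ)⁻¹ := by gcongr
    _ = _ := by rw [mul_one]

end Padic

theorem stmt4_general (p m : ℕ) [hp : Fact p.Prime] (hm : 2 ≤ m) (r ℓ s k : ℕ)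
    (hr : Nat.Coprime r p) (hℓ : ℓ = r * p ^ (m - 2))
    (h2 : ℓ < (p - 2) * p ^ (m - 1))
    (hs : s = ((Finset.Icc 1 (ℓ - 1)).filter fun j => padicValNat p j = m - 1).card) :
    ‖((k * p ^ (m - 1)).choose ℓ : ℚ_[p]) -
        (k : ℚ_[p]) * p / r * (-1) ^ (ℓ - s - 1) *
          ∏ j ∈ Finset.Icc 1 s, ((k : ℚ_[p]) / j - 1)‖ ≤ (p : ℝ) ^ (-2 : ℤ) := by
  obtain ⟨e, rfl⟩ : ∃ e, m = e + 2 := ⟨m - 2, by omega⟩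
  simp only [Nat.add_sub_cancel, show e + 2 - 1 = e + 1 from rfl] at hℓ h2 hs ⊢
  have hr0 : r ≠ 0 := fun h ↦ hp.out.ne_one ((Nat.coprime_zero_left p).1 (h ▸ hr))
  have hℓ0 : ℓ ≠ 0 := hℓ ▸ mul_ne_zero hr0 (pow_ne_zero _ hp.out.ne_zero)
  have hℓp : ℓ - 1 < p ^ (e + 2) := by
    have : (p - 2) * p ^ (e + 1) ≤ p ^ (e + 2) := by
      rw [pow_succ' p (e + 1)]
      exact Nat.mul_le_mul_right _ (Nat.sub_le p 2)
    omega
  have hsT : s = (ℓ - 1) / p ^ (e + 1) := by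
    rw [hs, filter_padicValNat_eq_eq_filter_pow_dvd hℓp, Nat.card_filter_dvd_Icc]
  have hhead : ((k * p ^ (e + 1) : ℕ) : ℚ_[p]) / ℓ = k * p / r := by
    have hp0 : (p : ℚ_[p]) ≠ 0 := Nat.cast_ne_zero.2 hp.out.ne_zero
    rw [hℓ]
    push_cast
    field_simp
    ring
  have hhead_norm : ‖(k : ℚ_[p]) * p / r‖ ≤ (p : ℝ)⁻¹ := by
    rw [norm_div, norm_mul, Padic.norm_p, Padic.norm_natCast_eq_one_iff.2 hr.symm, div_one]
    exact mul_le_of_le_one_left (by positivity) (IsUltrametricDist.norm_natCast_le_one ℚ_[p] k)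
  have key := Padic.norm_cast_choose_mul_pow_sub_le k hℓ0 hℓp
  rw [← hsT, hhead, show ℓ - 1 - s = ℓ - s - 1 by omega] at key
  calc _ ≤ ‖(k : ℚ_[p]) * p / r‖ * (p : ℝ)⁻¹ := key
    _ ≤ (p : ℝ)⁻¹ * (p : ℝ)⁻¹ := by gcongr
    _ = (p : ℝ) ^ (-2 : ℤ) := by rw [zpow_neg, ← mul_inv, zpow_two]

/-- For a prime `p`, `m ≥ 2`, `ℓ = r p^{m-2}` with `gcd(r,p) = 1`, `1 ≤ ℓ < (p-2)p^{m-1}`,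
`s = #{j : 1 ≤ j ≤ ℓ-1, ord_p(j) = m-1}`, and `s+1 ≤ k ≤ p-1`:
`C(k p^{m-1}, ℓ) ≡ (kp/r)·(-1)^{ℓ-s-1}·Π_{j=1}^{s}(k/j - 1) mod p² ℤ_p`. -/
theorem stmt4 (p m : ℕ) [hp : Fact p.Prime] (hm : 2 ≤ m) (r ℓ s k : ℕ)
    (hr : Nat.Coprime r p) (hℓ : ℓ = r * p ^ (m - 2))
    (h1 : 1 ≤ ℓ) (h2 : ℓ < (p - 2) * p ^ (m - 1))
    (hs : s = ((Finset.Icc 1 (ℓ - 1)).filter fun j => padicValNat p j = m - 1).card)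
    (hk1 : s + 1 ≤ k) (hk2 : k ≤ p - 1) :
    ‖((k * p ^ (m - 1)).choose ℓ : ℚ_[p]) -
        (k : ℚ_[p]) * p / r * (-1) ^ (ℓ - s - 1) *
          ∏ j ∈ Finset.Icc 1 s, ((k : ℚ_[p]) / j - 1)‖ ≤ (p : ℝ) ^ (-2 : ℤ) :=
  stmt4_general p m (hp := hp) hm r ℓ s k hr hℓ h2 hs
end

section
/- Let p be an odd prime, m ≥ 2, t an integer with 1 ≤ t ≤ p−2, and k an integer with t ≤ k ≤ p−1. Then C(k p^{m-1}, t p^{m-1}) ≡ C(k, t) · (1 − k p C) mod p^2 ℤ_p, where C = Σ_{1 ≤ j ≤ tp−1, p∤j} 1/j ∈ ℤ_p. In particular C(k p^{m-1}, t p^{m-1}) ≡ C(k, t) mod p^2 ℤ_p. -/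
/-! In `C(bp + rp, bp) = ∏_{j ≤ bp} (rp + j)/j` the factors with `p ∣ j` multiply to `C(b + r, b)`
and the others are `1 + rp/j` with `‖rp/j‖ ≤ 1/p`, so to second order
`C((b + r)p, bp) ≡ C(b + r, b) (1 + rp H) mod p²`, where `H = Σ_{j ≤ bp, p ∤ j} 1/j`.
For odd `p`, pairing `j` with `bp - j` gives `2H = Σ bp/(j(bp - j)) ≡ 0 mod p`, so
`C(ap, bp) ≡ C(a, b) mod p²` (Babbage); iterating handles `p^{m-1}`. The first claim then follows
because `kp·C ≡ 0 mod p²` by the same bound on the harmonic sum `C`. -/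

open Finset

namespace IsUltrametricDist

variable {R ι : Type*} [NormedCommRing R] [NormOneClass R] [IsUltrametricDist R]
  {s : Finset ι} {x : ι → R} {ε : ℝ}

lemma norm_prod_one_add_sub_one_le (hε₀ : 0 ≤ ε) (hε₁ : ε ≤ 1)
    (hx : ∀ i ∈ s, ‖x i‖ ≤ ε) : ‖∏ i ∈ s, (1 + x i) - 1‖ ≤ ε := by
  induction s using Finset.cons_induction with
  | empty => simpa using hε₀
  | cons a s _ ih =>
    have ih := ih fun i hi ↦ hx i (mem_cons_of_mem hi)
    have hP : ‖∏ i ∈ s, (1 + x i)‖ ≤ 1 := by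
      simpa using (norm_add_one_le_max_norm_one _).trans (max_le (ih.trans hε₁) le_rfl)
    rw [prod_cons, show (1 + x a) * ∏ i ∈ s, (1 + x i) - 1
      = (∏ i ∈ s, (1 + x i) - 1) + x a * ∏ i ∈ s, (1 + x i) by ring]
    refine (norm_add_le_max _ _).trans (max_le ih ((norm_mul_le _ _).trans ?_))
    simpa using mul_le_mul (hx a (mem_cons_self a s)) hP (norm_nonneg _) hε₀

lemma norm_prod_one_add_sub_one_sub_sum_le (hε₀ : 0 ≤ ε) (hε₁ : ε ≤ 1)
    (hx : ∀ i ∈ s, ‖x i‖ ≤ ε) : ‖∏ i ∈ s, (1 + x i) - 1 - ∑ i ∈ s, x i‖ ≤ ε ^ 2 := by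
  induction s using Finset.cons_induction with
  | empty => simpa using sq_nonneg ε
  | cons a s _ ih =>
    have hs : ∀ i ∈ s, ‖x i‖ ≤ ε := fun i hi ↦ hx i (mem_cons_of_mem hi)
    rw [prod_cons, sum_cons, show (1 + x a) * ∏ i ∈ s, (1 + x i) - 1 - (x a + ∑ i ∈ s, x i)
      = (∏ i ∈ s, (1 + x i) - 1 - ∑ i ∈ s, x i) + x a * (∏ i ∈ s, (1 + x i) - 1) by ring]
    refine (norm_add_le_max _ _).trans (max_le (ih hs) ((norm_mul_le _ _).trans ?_))
    rw [sq]
    exact mul_le_mul (hx a (mem_cons_self a s)) (norm_prod_one_add_sub_one_le hε₀ hε₁ hs)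
      (norm_nonneg _) hε₀

end IsUltrametricDist

lemma Nat.cast_add_choose_eq_prod {K : Type*} [Field K] [CharZero K] (m r : ℕ) :
    ((m + r).choose m : K) = ∏ j ∈ Icc 1 m, ((r + j : K) / j) := by
  induction m with
  | zero => simp
  | succ m ih =>
    rw [prod_Icc_succ_top (by omega), ← ih, mul_div_assoc',
      eq_div_iff (Nat.cast_ne_zero.2 m.succ_ne_zero), show m + 1 + r = m + r + 1 by ring]
    exact_mod_cast (Nat.add_one_mul_choose_eq (m + r) m).symm.trans (by ring)

lemma Nat.Icc_filter_dvd_eq_map {p : ℕ} (hp : 0 < p) (b : ℕ) :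
    (Icc 1 (b * p)).filter (p ∣ ·) = (Icc 1 b).map ⟨(· * p), mul_left_injective₀ hp.ne'⟩ := by
  ext j
  simp only [mem_filter, mem_Icc, mem_map, Function.Embedding.coeFn_mk, dvd_iff_exists_eq_mul_left]
  constructor
  · rintro ⟨⟨h1, h2⟩, c, rfl⟩
    exact ⟨c, ⟨Nat.pos_of_mul_pos_right h1, Nat.le_of_mul_le_mul_right h2 hp⟩, rfl⟩
  · rintro ⟨c, ⟨h1, h2⟩, rfl⟩
    exact ⟨⟨Nat.mul_pos h1 hp, Nat.mul_le_mul_right p h2⟩, c, rfl⟩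

lemma Nat.sub_mem_Icc_filter_not_dvd {p N j : ℕ} (hN : p ∣ N)
    (hj : j ∈ (Icc 1 N).filter (¬ p ∣ ·)) : j < N ∧ N - j ∈ (Icc 1 N).filter (¬ p ∣ ·) := by
  simp only [mem_filter, mem_Icc] at hj ⊢
  obtain ⟨⟨hj1, hjN⟩, hpj⟩ := hj
  have hjN : j < N := lt_of_le_of_ne hjN (by rintro rfl; exact hpj hN)
  refine ⟨hjN, ⟨by omega, by omega⟩, fun hpNj ↦ hpj ?_⟩
  simpa [Nat.sub_sub_self hjN.le] using Nat.dvd_sub hN hpNj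

lemma Nat.Icc_sub_one_filter_not_dvd {p N : ℕ} (hN : p ∣ N) :
    (Icc 1 (N - 1)).filter (¬ p ∣ ·) = (Icc 1 N).filter (¬ p ∣ ·) := by
  ext j
  have hjN := fun hj ↦ (Nat.sub_mem_Icc_filter_not_dvd (j := j) hN hj).1
  simp only [mem_filter, mem_Icc] at hjN ⊢
  constructor
  · rintro ⟨⟨hj1, hj⟩, hpj⟩
    exact ⟨⟨hj1, by omega⟩, hpj⟩
  · intro hj
    exact ⟨⟨hj.1.1, Nat.le_sub_one_of_lt (hjN hj)⟩, hj.2⟩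

lemma Nat.cast_choose_add_mul_eq {K : Type*} [Field K] [CharZero K] {p : ℕ} (hp : 0 < p)
    (b r : ℕ) : (((b + r) * p).choose (b * p) : K) =
      (b + r).choose b * ∏ j ∈ (Icc 1 (b * p)).filter (¬ p ∣ ·), (1 + ((r * p : ℕ) : K) / j) := by
  rw [add_mul, Nat.cast_add_choose_eq_prod, ← prod_filter_mul_prod_filter_not _ (p ∣ ·),
    Nat.Icc_filter_dvd_eq_map hp, prod_map, Nat.cast_add_choose_eq_prod]
  congr 1
  · refine prod_congr rfl fun i _ ↦ ?_
    have : (p : K) ≠ 0 := Nat.cast_ne_zero.2 hp.ne'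
    simp only [Function.Embedding.coeFn_mk, Nat.cast_mul]
    field_simp
  · refine prod_congr rfl fun j hj ↦ ?_
    have : j ≠ 0 := Nat.one_le_iff_ne_zero.1 (mem_Icc.1 (mem_filter.1 hj).1).1
    rw [add_div, div_self (Nat.cast_ne_zero.2 this), add_comm]

namespace Padic

open IsUltrametricDist

variable {p : ℕ} [hp : Fact p.Prime]

lemma norm_natCast_le_inv_of_dvd {n : ℕ} (h : p ∣ n) : ‖(n : ℚ_[p])‖ ≤ (p : ℝ)⁻¹ := by
  obtain ⟨c, rfl⟩ := h
  rw [Nat.cast_mul, norm_mul, norm_p]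
  exact mul_le_of_le_one_right (by positivity) (norm_natCast_le_one _ c)

lemma norm_natCast_eq_one_of_not_dvd {n : ℕ} (h : ¬ p ∣ n) : ‖(n : ℚ_[p])‖ = 1 :=
  norm_natCast_eq_one_iff.2 ((Nat.Prime.coprime_iff_not_dvd hp.out).2 h)

theorem norm_sum_filter_not_dvd_one_div_le (hodd : Odd p) {N : ℕ} (hN : p ∣ N) :
    ‖∑ j ∈ (Icc 1 N).filter (¬ p ∣ ·), (1 / (j : ℚ_[p]))‖ ≤ (p : ℝ)⁻¹ := by
  set s := (Icc 1 N).filter (¬ p ∣ ·)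
  have hs : ∀ j ∈ s, j < N ∧ N - j ∈ s := fun j hj ↦ Nat.sub_mem_Icc_filter_not_dvd hN hj
  have hreflect : ∑ j ∈ s, (1 / (j : ℚ_[p])) = ∑ j ∈ s, 1 / ((N - j : ℕ) : ℚ_[p]) :=
    (sum_nbij' (N - ·) (N - ·) (fun j hj ↦ (hs j hj).2) (fun j hj ↦ (hs j hj).2)
      (fun j hj ↦ Nat.sub_sub_self (hs j hj).1.le) (fun j hj ↦ Nat.sub_sub_self (hs j hj).1.le)
      (fun _ _ ↦ rfl)).symm
  have hnorm_one : ∀ j ∈ s, ‖(j : ℚ_[p])‖ = 1 := fun j hj ↦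
    norm_natCast_eq_one_of_not_dvd (mem_filter.1 hj).2
  have htwo : 2 * ∑ j ∈ s, (1 / (j : ℚ_[p])) = ∑ j ∈ s, (N : ℚ_[p]) / (j * (N - j : ℕ)) := by
    rw [two_mul]
    nth_rewrite 2 [hreflect]
    rw [← sum_add_distrib]
    refine sum_congr rfl fun j hj ↦ ?_
    obtain ⟨hjN, hNj⟩ := hs j hj
    have hj0 : (j : ℚ_[p]) ≠ 0 := norm_ne_zero_iff.1 (by simp [hnorm_one j hj])
    have hNj0 : ((N - j : ℕ) : ℚ_[p]) ≠ 0 := norm_ne_zero_iff.1 (by simp [hnorm_one _ hNj])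
    rw [Nat.cast_sub hjN.le] at hNj0 ⊢
    field_simp
    ring
  have hterm : ∀ j ∈ s, ‖(N : ℚ_[p]) / (j * (N - j : ℕ))‖ ≤ (p : ℝ)⁻¹ := fun j hj ↦ by
    rw [norm_div, norm_mul, hnorm_one j hj, hnorm_one _ (hs j hj).2,
      mul_one, div_one]
    exact norm_natCast_le_inv_of_dvd hN
  have hnorm_two : ‖(2 : ℚ_[p])‖ = 1 := by
    exact_mod_cast norm_natCast_eq_one_iff.2 (Nat.coprime_two_right.2 hodd)
  calc ‖∑ j ∈ s, (1 / (j : ℚ_[p]))‖ = ‖2 * ∑ j ∈ s, (1 / (j : ℚ_[p]))‖ := by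
        rw [norm_mul, hnorm_two, one_mul]
    _ ≤ (p : ℝ)⁻¹ := htwo ▸ norm_sum_le_of_forall_le_of_nonneg (by positivity) hterm

theorem norm_cast_choose_mul_sub_cast_choose_le (hodd : Odd p) (a b : ℕ) :
    ‖((a * p).choose (b * p) : ℚ_[p]) - a.choose b‖ ≤ (p : ℝ)⁻¹ ^ 2 := by
  rcases lt_or_ge a b with hab | hab
  · rw [Nat.choose_eq_zero_of_lt hab,
      Nat.choose_eq_zero_of_lt (Nat.mul_lt_mul_of_pos_right hab hp.out.pos)]
    simp
  obtain ⟨r, rfl⟩ := Nat.exists_eq_add_of_le hab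
  set s := (Icc 1 (b * p)).filter (¬ p ∣ ·)
  set x : ℕ → ℚ_[p] := fun j ↦ ((r * p : ℕ) : ℚ_[p]) / j
  have hε₀ : (0 : ℝ) ≤ (p : ℝ)⁻¹ := by positivity
  have hε₁ : (p : ℝ)⁻¹ ≤ 1 := inv_le_one_of_one_le₀ (by exact_mod_cast hp.out.one_le)
  have hrp : ‖((r * p : ℕ) : ℚ_[p])‖ ≤ (p : ℝ)⁻¹ := norm_natCast_le_inv_of_dvd (dvd_mul_left p r)
  have hx : ∀ j ∈ s, ‖x j‖ ≤ (p : ℝ)⁻¹ := fun j hj ↦ by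
    rw [norm_div, norm_natCast_eq_one_of_not_dvd (mem_filter.1 hj).2, div_one]
    exact hrp
  have hsum : ‖∑ j ∈ s, x j‖ ≤ (p : ℝ)⁻¹ ^ 2 := by
    rw [show ∑ j ∈ s, x j = ((r * p : ℕ) : ℚ_[p]) * ∑ j ∈ s, (1 / (j : ℚ_[p])) by
      simp only [x, mul_sum, mul_one_div], norm_mul, sq]
    exact mul_le_mul hrp (norm_sum_filter_not_dvd_one_div_le hodd (dvd_mul_left p b))
      (norm_nonneg _) hε₀
  have hprod : ‖∏ j ∈ s, (1 + x j) - 1‖ ≤ (p : ℝ)⁻¹ ^ 2 := by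
    rw [← sub_add_cancel (∏ j ∈ s, (1 + x j) - 1) (∑ j ∈ s, x j)]
    exact (norm_add_le_max _ _).trans
      (max_le (norm_prod_one_add_sub_one_sub_sum_le hε₀ hε₁ hx) hsum)
  rw [Nat.cast_choose_add_mul_eq hp.out.pos, ← mul_sub_one, norm_mul]
  exact (mul_le_of_le_one_left (norm_nonneg _) (norm_natCast_le_one _ _)).trans
    hprod

theorem norm_cast_choose_mul_pow_sub_cast_choose_le (hodd : Odd p) (a b e : ℕ) :
    ‖((a * p ^ e).choose (b * p ^ e) : ℚ_[p]) - a.choose b‖ ≤ (p : ℝ)⁻¹ ^ 2 := by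
  induction e with
  | zero => simp
  | succ e ih =>
    have step := norm_cast_choose_mul_sub_cast_choose_le hodd (a * p ^ e) (b * p ^ e)
    rw [mul_assoc, mul_assoc, ← pow_succ] at step
    rw [← sub_add_sub_cancel _ ((a * p ^ e).choose (b * p ^ e) : ℚ_[p])]
    exact (norm_add_le_max _ _).trans (max_le step ih)

end Padic

theorem stmt7_general (p m : ℕ) [hp : Fact p.Prime] (hodd : Odd p) (t k : ℕ) :
    ‖((k * p ^ (m - 1)).choose (t * p ^ (m - 1)) : ℚ_[p]) -
        (k.choose t : ℚ_[p]) * (1 - (k : ℚ_[p]) * p *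
          ∑ j ∈ (Finset.Icc 1 (t * p - 1)).filter (fun j => ¬ p ∣ j), (1 / (j : ℚ_[p])))‖
      ≤ (p : ℝ) ^ (-2 : ℤ) ∧
    ‖((k * p ^ (m - 1)).choose (t * p ^ (m - 1)) : ℚ_[p]) - (k.choose t : ℚ_[p])‖
      ≤ (p : ℝ) ^ (-2 : ℤ) := by
  rw [zpow_neg, zpow_ofNat, ← inv_pow]
  have hbabbage := Padic.norm_cast_choose_mul_pow_sub_cast_choose_le hodd k t (m - 1)
  refine ⟨?_, hbabbage⟩
  have hharmonic := Padic.norm_sum_filter_not_dvd_one_div_le hodd (dvd_mul_left p t)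
  rw [← Nat.Icc_sub_one_filter_not_dvd (dvd_mul_left p t)] at hharmonic
  have hkp : ‖(k : ℚ_[p]) * p‖ ≤ (p : ℝ)⁻¹ := by
    exact_mod_cast Padic.norm_natCast_le_inv_of_dvd (dvd_mul_left p k)
  set X := ((k * p ^ (m - 1)).choose (t * p ^ (m - 1)) : ℚ_[p])
  set H := ∑ j ∈ (Icc 1 (t * p - 1)).filter (fun j => ¬ p ∣ j), (1 / (j : ℚ_[p]))
  rw [show X - k.choose t * (1 - k * p * H) = (X - k.choose t) + k.choose t * (k * p) * H by ring]
  refine (IsUltrametricDist.norm_add_le_max _ _).trans (max_le hbabbage ?_)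
  have hchoose : ‖(k.choose t : ℚ_[p])‖ ≤ 1 := IsUltrametricDist.norm_natCast_le_one _ _
  rw [norm_mul, norm_mul, sq]
  exact mul_le_mul ((mul_le_of_le_one_left (norm_nonneg _) hchoose).trans hkp) hharmonic
    (norm_nonneg _) (by positivity)

/-- For an odd prime `p`, `m ≥ 2`, `1 ≤ t ≤ p-2` and `t ≤ k ≤ p-1`:
`C(k p^{m-1}, t p^{m-1}) ≡ C(k,t)·(1 - kpC) mod p² ℤ_p` where
`C = Σ_{1 ≤ j ≤ tp-1, p∤j} 1/j ∈ ℤ_p`; in particular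
`C(k p^{m-1}, t p^{m-1}) ≡ C(k,t) mod p² ℤ_p`. -/
theorem stmt7 (p m : ℕ) [hp : Fact p.Prime] (hodd : Odd p) (hm : 2 ≤ m)
    (t k : ℕ) (ht1 : 1 ≤ t) (ht2 : t ≤ p - 2) (hk1 : t ≤ k) (hk2 : k ≤ p - 1) :
    ‖((k * p ^ (m - 1)).choose (t * p ^ (m - 1)) : ℚ_[p]) -
        (k.choose t : ℚ_[p]) * (1 - (k : ℚ_[p]) * p *
          ∑ j ∈ (Finset.Icc 1 (t * p - 1)).filter (fun j => ¬ p ∣ j), (1 / (j : ℚ_[p])))‖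
      ≤ (p : ℝ) ^ (-2 : ℤ) ∧
    ‖((k * p ^ (m - 1)).choose (t * p ^ (m - 1)) : ℚ_[p]) - (k.choose t : ℚ_[p])‖
      ≤ (p : ℝ) ^ (-2 : ℤ) :=
  stmt7_general p m (hp := hp) hodd t k
end

section
/- Let p be an odd prime, m ≥ 2, and ℓ = t p^{m-1} with 1 ≤ t ≤ p−2. Then a_ℓ = Σ_{k=t}^{p-1} C(k p^{m-1}, ℓ) ≡ (−1)^t · p/(t+1) mod p^2 ℤ_p. -/
/-!
Over `ZMod (p ^ 2)` write `(X + 1) ^ p = expand p (X + 1) + F`. Every coefficient of `F` is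
divisible by `p`, so `F * F = 0`, and `F` vanishes in degrees divisible by `p`. Hence
`(X + 1) ^ (p * a) = expand p ((X + 1) ^ a) + a * expand p ((X + 1) ^ (a - 1)) * F`, whose
coefficient of `X ^ (p * b)` is `C(a, b)`; that is, `C(p a, p b) ≡ C(a, b) mod p²`. Iterating,
the sum is `Σ_{k=t}^{p-1} C(k, t) = C(p, t + 1) = p / (t + 1) * C(p - 1, t)` modulo `p²`, and
`C(p - 1, t) ≡ (-1) ^ t mod p`.
-/

open Polynomial

theorem add_pow_eq_of_mul_self_eq_zero {R : Type*} [CommSemiring R] {a b : R} (hb : b * b = 0) :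
    ∀ n : ℕ, (a + b) ^ n = a ^ n + n * a ^ (n - 1) * b
  | 0 => by simp
  | 1 => by simp
  | n + 2 => by
    calc (a + b) ^ (n + 2) = (a + b) ^ (n + 1) * (a + b) := pow_succ _ _
      _ = (a ^ (n + 1) + (n + 1 : ℕ) * a ^ n * b) * (a + b) := by
        rw [add_pow_eq_of_mul_self_eq_zero hb (n + 1), Nat.add_sub_cancel]
      _ = a ^ (n + 2) + (n + 2 : ℕ) * a ^ (n + 1) * b + (n + 1 : ℕ) * a ^ n * (b * b) := by
        push_cast; ring
      _ = _ := by rw [hb]; simp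

namespace Polynomial

variable {R : Type*} {p : ℕ}

theorem coeff_expand_mul_mul_eq_zero [CommSemiring R] (hp : 0 < p) (f : R[X]) {g : R[X]}
    (hg : ∀ j, p ∣ j → g.coeff j = 0) (n : ℕ) : (expand R p f * g).coeff (p * n) = 0 := by
  rw [coeff_mul]
  refine Finset.sum_eq_zero fun ⟨i, j⟩ hij => ?_
  rw [Finset.HasAntidiagonal.mem_antidiagonal] at hij
  by_cases hi : p ∣ i
  · rw [hg j ((Nat.dvd_add_right hi).mp (hij ▸ dvd_mul_right p n)), mul_zero]
  · rw [coeff_expand hp, if_neg hi, zero_mul]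

theorem coeff_X_add_one_pow_sub_expand_of_dvd [CommRing R] (hp : 0 < p) {j : ℕ} (hj : p ∣ j) :
    ((X + 1 : R[X]) ^ p - expand R p (X + 1)).coeff j = 0 := by
  obtain ⟨c, rfl⟩ := hj
  rw [coeff_sub, coeff_X_add_one_pow, coeff_expand_mul' hp]
  rcases c with _ | _ | c
  · simp
  · simp [coeff_one]
  · rw [Nat.choose_eq_zero_of_lt (by nlinarith), coeff_add, coeff_X, coeff_one]
    simp

theorem C_dvd_X_add_one_pow_sub_expand [CommRing R] (hp : p.Prime) :
    C (p : R) ∣ (X + 1) ^ p - expand R p (X + 1) := by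
  refine (C_dvd_iff_dvd_coeff _ _).mpr fun j => ?_
  by_cases hj : p ∣ j
  · rw [coeff_X_add_one_pow_sub_expand_of_dvd hp.pos hj]
    exact dvd_zero _
  rw [coeff_sub, coeff_X_add_one_pow, coeff_expand hp.pos, if_neg hj, sub_zero]
  rcases lt_or_gt_of_ne (show j ≠ p by rintro rfl; exact hj dvd_rfl) with hjp | hjp
  · exact Nat.cast_dvd_cast (hp.dvd_choose_self (by rintro rfl; exact hj (dvd_zero p)) hjp)
  · rw [Nat.choose_eq_zero_of_lt hjp, Nat.cast_zero]
    exact dvd_zero _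

end Polynomial

namespace Choose

variable {p : ℕ}

theorem choose_mul_mul_modEq_choose_sq (hp : p.Prime) (a b : ℕ) :
    (p * a).choose (p * b) ≡ a.choose b [MOD p ^ 2] := by
  rw [← ZMod.natCast_eq_natCast_iff]
  set F : (ZMod (p ^ 2))[X] := (X + 1) ^ p - expand _ p (X + 1)
  have hFF : F * F = 0 := by
    obtain ⟨G, hG⟩ : C (p : ZMod (p ^ 2)) ∣ F := C_dvd_X_add_one_pow_sub_expand hp
    rw [hG, mul_mul_mul_comm, ← C_mul, ← Nat.cast_mul, ← sq, ZMod.natCast_self, C_0, zero_mul]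
  have hpow : (X + 1 : (ZMod (p ^ 2))[X]) ^ (p * a)
      = expand _ p ((X + 1) ^ a)
        + (a : (ZMod (p ^ 2))[X]) * (expand _ p ((X + 1) ^ (a - 1)) * F) := by
    rw [pow_mul, ← add_sub_cancel (expand _ p (X + 1)) ((X + 1) ^ p),
      add_pow_eq_of_mul_self_eq_zero hFF, map_pow, map_pow, mul_assoc]
  have hcoeff := congrArg (coeff · (p * b)) hpow
  rwa [coeff_add, coeff_natCast_mul, coeff_expand_mul' hp.pos, coeff_X_add_one_pow,
    coeff_expand_mul_mul_eq_zero hp.pos _ (fun _ => coeff_X_add_one_pow_sub_expand_of_dvd hp.pos),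
    mul_zero, add_zero, coeff_X_add_one_pow] at hcoeff

theorem choose_pow_mul_pow_mul_modEq_choose_sq (hp : p.Prime) (k a b : ℕ) :
    (p ^ k * a).choose (p ^ k * b) ≡ a.choose b [MOD p ^ 2] := by
  induction k with
  | zero => simp [Nat.ModEq.refl]
  | succ k ih =>
    rw [pow_succ' p k, mul_assoc, mul_assoc]
    exact (choose_mul_mul_modEq_choose_sq hp _ _).trans ih

end Choose

theorem Nat.cast_choose_sub_one_eq_neg_one_pow {R : Type*} [Ring R] {p : ℕ} [CharP R p]
    (hp : p.Prime) {t : ℕ} (ht : t < p) : ((p - 1).choose t : R) = (-1) ^ t := by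
  induction t with
  | zero => simp
  | succ t ih =>
    have hpascal : (p - 1).choose t + (p - 1).choose (t + 1) = p.choose (t + 1) := by
      rw [← Nat.choose_succ_succ', Nat.sub_add_cancel hp.one_le]
    have hzero : (p.choose (t + 1) : R) = 0 :=
      (CharP.cast_eq_zero_iff R p _).mpr (hp.dvd_choose_self t.succ_ne_zero ht)
    rw [← hpascal, Nat.cast_add, ih (by omega)] at hzero
    rw [pow_succ, mul_neg_one]
    exact eq_neg_of_add_eq_zero_right hzero

namespace Padic

variable {p : ℕ} [Fact p.Prime]

theorem norm_intCast_sub_le_of_modEq {a b : ℤ} {n : ℕ} (h : a ≡ b [ZMOD p ^ n]) :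
    ‖(a : ℚ_[p]) - b‖ ≤ (p : ℝ) ^ (-n : ℤ) := by
  rw [← Int.cast_sub]
  exact (norm_int_le_pow_iff_dvd _ _).mpr h.symm.dvd

theorem norm_natCast_sub_le_of_modEq {a b n : ℕ} (h : a ≡ b [MOD p ^ n]) :
    ‖(a : ℚ_[p]) - b‖ ≤ (p : ℝ) ^ (-n : ℤ) := by
  have := norm_intCast_sub_le_of_modEq (p := p) (Int.natCast_modEq_iff.mpr h)
  push_cast at this
  exact this

theorem norm_choose_succ_sub_le {t : ℕ} (ht : t + 1 < p) :
    ‖(p.choose (t + 1) : ℚ_[p]) - (-1) ^ t * p / (t + 1)‖ ≤ (p : ℝ) ^ (-2 : ℤ) := by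
  have hp := (Fact.out : p.Prime)
  have hunit : ‖(t : ℚ_[p]) + 1‖ = 1 := by
    exact_mod_cast norm_natCast_eq_one_iff.mpr (Nat.coprime_of_lt_prime t.succ_ne_zero ht hp)
  have hfactor : (p.choose (t + 1) : ℚ_[p]) - (-1) ^ t * p / (t + 1)
      = p / (t + 1) * ((p - 1).choose t - (-1) ^ t) := by
    have habsorb : (p : ℚ_[p]) * (p - 1).choose t = p.choose (t + 1) * (t + 1) := by
      have := Nat.add_one_mul_choose_eq (p - 1) t
      rw [Nat.sub_add_cancel hp.one_le] at this
      exact_mod_cast this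
    have ht0 : (t : ℚ_[p]) + 1 ≠ 0 := norm_ne_zero_iff.mp (by rw [hunit]; exact one_ne_zero)
    field_simp
    linear_combination -habsorb
  have hmod : ((p - 1).choose t : ℤ) ≡ (-1) ^ t [ZMOD p ^ 1] := by
    rw [pow_one, ← ZMod.intCast_eq_intCast_iff]
    push_cast
    exact Nat.cast_choose_sub_one_eq_neg_one_pow hp (by omega)
  have hcong := norm_intCast_sub_le_of_modEq hmod
  push_cast at hcong
  rw [hfactor, norm_mul, norm_div, norm_p, hunit, div_one]
  calc (p : ℝ)⁻¹ * ‖((p - 1).choose t : ℚ_[p]) - (-1) ^ t‖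
      ≤ (p : ℝ)⁻¹ * (p : ℝ) ^ (-1 : ℤ) := by gcongr
    _ = (p : ℝ) ^ (-2 : ℤ) := by
      rw [← zpow_neg_one, ← zpow_add₀ (Nat.cast_ne_zero.mpr hp.ne_zero)]
      norm_num

end Padic

theorem stmt8_general (p m : ℕ) [hp : Fact p.Prime] (t : ℕ) (ht2 : t ≤ p - 2) :
    ‖(∑ k ∈ Finset.Icc t (p - 1),
        ((k * p ^ (m - 1)).choose (t * p ^ (m - 1)) : ℚ_[p])) -
        (-1) ^ t * p / ((t : ℚ_[p]) + 1)‖ ≤ (p : ℝ) ^ (-2 : ℤ) := by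
  have hsum : ∑ k ∈ Finset.Icc t (p - 1), (k * p ^ (m - 1)).choose (t * p ^ (m - 1))
      ≡ p.choose (t + 1) [MOD p ^ 2] :=
    calc _ ≡ ∑ k ∈ Finset.Icc t (p - 1), k.choose t [MOD p ^ 2] := Nat.ModEq.sum fun k _ => by
          simpa only [mul_comm _ (p ^ _)] using
            Choose.choose_pow_mul_pow_mul_modEq_choose_sq hp.out (m - 1) k t
      _ = p.choose (t + 1) := by rw [Nat.sum_Icc_choose, Nat.sub_add_cancel hp.out.one_le]
  have ht : t + 1 < p := by have := hp.out.two_le; omega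
  rw [← Nat.cast_sum, ← sub_add_sub_cancel _ (p.choose (t + 1) : ℚ_[p])]
  exact (Padic.nonarchimedean _ _).trans
    (max_le (Padic.norm_natCast_sub_le_of_modEq hsum) (Padic.norm_choose_succ_sub_le ht))

/-- For an odd prime `p`, `m ≥ 2`, and `ℓ = t p^{m-1}` with `1 ≤ t ≤ p-2`:
`a_ℓ = Σ_{k=t}^{p-1} C(k p^{m-1}, ℓ) ≡ (-1)^t · p/(t+1) mod p² ℤ_p`. -/
theorem stmt8 (p m : ℕ) [hp : Fact p.Prime] (hodd : Odd p) (hm : 2 ≤ m)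
    (t : ℕ) (ht1 : 1 ≤ t) (ht2 : t ≤ p - 2) :
    ‖(∑ k ∈ Finset.Icc t (p - 1),
        ((k * p ^ (m - 1)).choose (t * p ^ (m - 1)) : ℚ_[p])) -
        (-1) ^ t * p / ((t : ℚ_[p]) + 1)‖ ≤ (p : ℝ) ^ (-2 : ℤ) :=
  stmt8_general p m (hp := hp) t ht2
end

section
/- Let p be a prime and m ≥ 2. If (p−2)p^{m-1} < ℓ < (p−2)p^{m-1} + p^{m-2}, then the p-adic valuation of C((p−1)p^{m-1}, ℓ) is at least 2. -/
/-!
Since `ℓ · C(n, ℓ) = n · C(n - 1, ℓ - 1)`, the power `p^(m-1)` dividing `n = (p-1)p^(m-1)` divides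
`ℓ · C(n, ℓ)`. The range of `ℓ` places it strictly between consecutive multiples of `p^(m-2)`,
so at most `p^(m-3)` divides `ℓ`, and the remaining factor `p^2` must divide `C(n, ℓ)`.
-/

theorem Nat.dvd_mul_choose (n k : ℕ) : n ∣ k * n.choose k := by
  rcases n with _ | n
  · rcases k with _ | k <;> simp
  rcases k with _ | k
  · simp
  exact ⟨n.choose k, by rw [mul_comm, ← add_one_mul_choose_eq]⟩

theorem Nat.Prime.pow_dvd_of_pow_add_dvd_mul_of_not_pow_succ_dvd {p k j x y : ℕ} (hp : p.Prime)
    (hxy : p ^ (k + j) ∣ x * y) (hx : ¬p ^ (k + 1) ∣ x) : p ^ j ∣ y := by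
  rcases eq_or_ne y 0 with rfl | hy
  · exact dvd_zero _
  have hx0 : x ≠ 0 := by rintro rfl; exact hx (dvd_zero _)
  have := Fact.mk hp
  rw [padicValNat_dvd_iff_le hy]
  rw [padicValNat_dvd_iff_le (mul_ne_zero hx0 hy), padicValNat.mul hx0 hy] at hxy
  rw [padicValNat_dvd_iff_le hx0, not_le] at hx
  omega

theorem stmt9_general (p m : ℕ) (hp : p.Prime) (ℓ : ℕ)
    (h1 : (p - 2) * p ^ (m - 1) < ℓ) (h2 : ℓ < (p - 2) * p ^ (m - 1) + p ^ (m - 2)) :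
    p ^ 2 ∣ ((p - 1) * p ^ (m - 1)).choose ℓ := by
  obtain ⟨k, rfl⟩ : ∃ k, m = k + 3 := by
    refine ⟨m - 3, ?_⟩
    by_contra hm
    rw [show m - 2 = 0 by omega, pow_zero] at h2
    omega
  simp only [show k + 3 - 1 = k + 2 by omega, show k + 3 - 2 = k + 1 by omega] at h1 h2
  have hpow : p ^ (k + 2) = p ^ (k + 1) * p := pow_succ p (k + 1)
  have hℓ : ¬p ^ (k + 1) ∣ ℓ := by
    refine Nat.not_dvd_of_lt_of_lt_mul_succ (k := (p - 2) * p) ?_ ?_ <;>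
      rw [hpow] at h1 h2 <;> linarith
  refine hp.pow_dvd_of_pow_add_dvd_mul_of_not_pow_succ_dvd ?_ hℓ
  exact (Dvd.intro_left _ rfl).trans (Nat.dvd_mul_choose _ ℓ)

/-- For a prime `p`, `m ≥ 2`, and `(p-2)p^{m-1} < ℓ < (p-2)p^{m-1} + p^{m-2}`,
the `p`-adic valuation of `C((p-1)p^{m-1}, ℓ)` is at least 2. -/
theorem stmt9 (p m : ℕ) (hp : p.Prime) (hm : 2 ≤ m) (ℓ : ℕ)
    (h1 : (p - 2) * p ^ (m - 1) < ℓ) (h2 : ℓ < (p - 2) * p ^ (m - 1) + p ^ (m - 2)) :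
    p ^ 2 ∣ ((p - 1) * p ^ (m - 1)).choose ℓ :=
  stmt9_general p m hp ℓ h1 h2
end

section
/- Let p be an odd prime and m ≥ 2. The product Π_{j=1}^{d−2} ((p−1)p^{m-1}/j − 1), where d−1 = (p−2)p^{m-1} + p^{m-2}, satisfies Π_{j=1}^{d−2} ((p−1)p^{m-1}/j − 1) ≡ 1 mod p ℤ_p. -/
/-!
With `X = (p-1)p^{m-1}` the product is `∏_{j ≤ d-2} (X - j)/j = C(X-1, d-2)`. In base `p`,
`X - 1` has digits `(p-2, p-1, p-1, …, p-1)` and `d - 2` has digits `(p-2, 0, p-1, …, p-1)`,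
so by Lucas' theorem `C(X-1, d-2) ≡ C(p-2, p-2) C(p-1, 0) C(p-1, p-1)^{m-2} = 1 (mod p)`.
-/

namespace Nat

theorem choose_mul_add_modEq_mul_choose {p : ℕ} [Fact p.Prime] {a b r s : ℕ} (hr : r < p)
    (hs : s < p) : (a * p + r).choose (b * p + s) ≡ r.choose s * a.choose b [MOD p] := by
  have hp : 0 < p := (Fact.out : p.Prime).pos
  have hdiv {c t : ℕ} (ht : t < p) : (c * p + t) / p = c := by
    rw [add_comm, Nat.add_mul_div_right _ _ hp, Nat.div_eq_of_lt ht, zero_add]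
  have hmod {c t : ℕ} (ht : t < p) : (c * p + t) % p = t := by
    rw [Nat.mul_add_mod_self_right, Nat.mod_eq_of_lt ht]
  have h := Choose.choose_modEq_choose_mod_mul_choose_div_nat (p := p) (n := a * p + r)
    (k := b * p + s)
  rwa [hmod hr, hmod hs, hdiv hr, hdiv hs] at h

theorem pow_succ_sub_one_eq (p k : ℕ) (hp : 0 < p) :
    p ^ (k + 1) - 1 = (p ^ k - 1) * p + (p - 1) := by
  zify [Nat.one_le_pow k p hp, Nat.one_le_pow (k + 1) p hp, hp]
  ring

theorem choose_mul_pow_add_pow_sub_one_modEq {p : ℕ} [Fact p.Prime] (a b k : ℕ) :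
    (a * p ^ k + (p ^ k - 1)).choose (b * p ^ k + (p ^ k - 1)) ≡ a.choose b [MOD p] := by
  have hp : 0 < p := (Fact.out : p.Prime).pos
  induction k with
  | zero => simp [Nat.ModEq.refl]
  | succ k ih =>
    have hsplit (c : ℕ) : c * p ^ (k + 1) + (p ^ (k + 1) - 1)
        = (c * p ^ k + (p ^ k - 1)) * p + (p - 1) := by
      rw [pow_succ_sub_one_eq p k hp, pow_succ]
      ring
    rw [hsplit, hsplit]
    calc _ ≡ (p - 1).choose (p - 1) * (a * p ^ k + (p ^ k - 1)).choose (b * p ^ k + (p ^ k - 1))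
          [MOD p] := choose_mul_add_modEq_mul_choose (by omega) (by omega)
      _ ≡ a.choose b [MOD p] := by simpa using ih

end Nat

theorem Finset.prod_Icc_div_sub_one_eq_choose {K : Type*} [Field K] [CharZero K] {X N : ℕ}
    (hN : N < X) : ∏ j ∈ Finset.Icc 1 N, ((X : K) / j - 1) = ((X - 1).choose N : K) := by
  induction N with
  | zero => simp
  | succ N ih =>
    rw [Finset.prod_Icc_succ_top (by omega), ih (by omega)]
    have hrec := congrArg (Nat.cast : ℕ → K) (Nat.choose_succ_right_eq (X - 1) N)
    push_cast [show N ≤ X - 1 by omega, show 1 ≤ X by omega] at hrec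
    have : ((N : K) + 1) ≠ 0 := Nat.cast_add_one_ne_zero N
    field_simp
    push_cast
    linear_combination -hrec

theorem Padic.norm_natCast_sub_le_inv_of_modEq {p : ℕ} [Fact p.Prime] {a b : ℕ}
    (h : a ≡ b [MOD p]) : ‖(a : ℚ_[p]) - b‖ ≤ (p : ℝ)⁻¹ := by
  have hdvd : ((p ^ 1 : ℕ) : ℤ) ∣ (a : ℤ) - b := by
    simpa using (Nat.modEq_iff_dvd.mp h.symm)
  simpa using (Padic.norm_int_le_pow_iff_dvd ((a : ℤ) - b) 1).mpr (by exact_mod_cast hdvd)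

theorem stmt11_general (p m : ℕ) [hp : Fact p.Prime] (hm : 2 ≤ m) :
    ‖(∏ j ∈ Finset.Icc 1 ((p - 2) * p ^ (m - 1) + p ^ (m - 2) - 1),
        (((p : ℚ_[p]) - 1) * (p : ℚ_[p]) ^ (m - 1) / j - 1)) - 1‖ ≤ (p : ℝ)⁻¹ := by
  obtain ⟨n, rfl⟩ : ∃ n, m = n + 2 := ⟨m - 2, by omega⟩
  have hp2 : 2 ≤ p := hp.out.two_le
  have hpn : 1 ≤ p ^ n := Nat.one_le_pow n p (by omega)
  have htop : (p - 1) * p ^ (n + 1) = ((p - 2) * p + (p - 1)) * p ^ n + (p ^ n - 1) + 1 := by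
    zify [hp2, hpn, show 1 ≤ p by omega]
    ring
  have hbot : (p - 2) * p ^ (n + 1) + p ^ n - 1 = ((p - 2) * p + 0) * p ^ n + (p ^ n - 1) := by
    zify [hp2, hpn, show 1 ≤ (p - 2) * p ^ (n + 1) + p ^ n by omega]
    ring
  have hlt : ((p - 2) * p + 0) * p ^ n < ((p - 2) * p + (p - 1)) * p ^ n + 1 :=
    Nat.lt_succ_of_le (Nat.mul_le_mul_right _ (by omega))
  have hcast : ((p : ℚ_[p]) - 1) * (p : ℚ_[p]) ^ (n + 1)
      = (((p - 1) * p ^ (n + 1) : ℕ) : ℚ_[p]) := by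
    push_cast [show 1 ≤ p by omega]
    ring
  simp only [Nat.add_sub_cancel, show n + 2 - 1 = n + 1 by omega]
  rw [hcast, hbot, htop, Finset.prod_Icc_div_sub_one_eq_choose (by omega), Nat.add_sub_cancel,
    ← Nat.cast_one (R := ℚ_[p])]
  refine Padic.norm_natCast_sub_le_inv_of_modEq ?_
  calc _ ≡ ((p - 2) * p + (p - 1)).choose ((p - 2) * p + 0) [MOD p] :=
        Nat.choose_mul_pow_add_pow_sub_one_modEq _ _ _
    _ ≡ (p - 1).choose 0 * (p - 2).choose (p - 2) [MOD p] :=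
        Nat.choose_mul_add_modEq_mul_choose (by omega) (by omega)
    _ = 1 := by simp

/-- For an odd prime `p` and `m ≥ 2`, with `d - 1 = (p-2)p^{m-1} + p^{m-2}`,
the product `Π_{j=1}^{d-2} ((p-1)p^{m-1}/j - 1)` is `≡ 1 mod p ℤ_p`. -/
theorem stmt11 (p m : ℕ) [hp : Fact p.Prime] (hodd : Odd p) (hm : 2 ≤ m) :
    ‖(∏ j ∈ Finset.Icc 1 ((p - 2) * p ^ (m - 1) + p ^ (m - 2) - 1),
        (((p : ℚ_[p]) - 1) * (p : ℚ_[p]) ^ (m - 1) / j - 1)) - 1‖ ≤ (p : ℝ)⁻¹ :=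
  stmt11_general p m (hp := hp) hm
end

section
/- Let p be a prime, n ≥ 1, ζ_p a primitive p-th root of unity, and p^{1/p^i} compatible p^i-th roots of p. Then the p-adic valuation of (1 − ζ_p) / (p^{1/p} · p^{1/p^2} ⋯ p^{1/p^n}) equals 1/(p^n (p−1)); in particular this element is a uniformizer of ℚ_p(ζ_p, p^{1/p^n}). -/
/-!
Since `1 - ζ^j = (1 - ζ)(1 + ζ + ⋯ + ζ^{j-1})` and the second factor is a sum of roots of unity, the
ultrametric inequality gives `v(1 - ζ) ≤ v(1 - ζ^j)`; as `ζ` is in turn a power of the primitive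
root `ζ^j`, all `p - 1` elements `1 - ζ^j` have the same valuation. Their product is `p`, so
`v(1 - ζ) = 1/(p - 1)`. Finally `v(p^{1/p^i}) = 1/p^i`, and
`1/(p - 1) - ∑_{i=1}^n 1/p^i = 1/(p^n (p - 1))`.
-/

open Finset

theorem IsPrimitiveRoot.geom_sum_ne_zero {K : Type*} [Field K] {ξ : K} {k j : ℕ}
    (hξ : IsPrimitiveRoot ξ k) (hj : 0 < j) (hjk : j < k) : ∑ i ∈ range j, ξ ^ i ≠ 0 := by
  rw [geom_sum_eq (hξ.ne_one (by omega))]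
  exact div_ne_zero (sub_ne_zero.mpr (hξ.pow_ne_one_of_pos_of_lt hj.ne' hjk))
    (sub_ne_zero.mpr (hξ.ne_one (by omega)))

section Valuation

variable {K : Type*} [Field K] {v : K → ℚ}
  (hv_mul : ∀ x y : K, x ≠ 0 → y ≠ 0 → v (x * y) = v x + v y)
include hv_mul

theorem val_one : v 1 = 0 := by
  have h := hv_mul 1 1 one_ne_zero one_ne_zero
  rw [mul_one] at h
  linarith

theorem val_pow {x : K} (hx : x ≠ 0) (k : ℕ) : v (x ^ k) = k * v x := by
  induction k with
  | zero => simp [val_one hv_mul]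
  | succ k ih =>
    rw [pow_succ, hv_mul _ _ (pow_ne_zero _ hx) hx, ih]
    push_cast
    ring

theorem val_prod {ι : Type*} (s : Finset ι) {f : ι → K} (hf : ∀ i ∈ s, f i ≠ 0) :
    v (∏ i ∈ s, f i) = ∑ i ∈ s, v (f i) := by
  classical
  induction s using Finset.induction with
  | empty => simp [val_one hv_mul]
  | insert a s has ih =>
    rw [prod_insert has, sum_insert has,
      hv_mul _ _ (hf a (mem_insert_self a s)) (prod_ne_zero_iff.mpr fun i hi =>
        hf i (mem_insert_of_mem hi)),
      ih fun i hi => hf i (mem_insert_of_mem hi)]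

theorem val_div {x y : K} (hx : x ≠ 0) (hy : y ≠ 0) : v (x / y) = v x - v y := by
  have h := hv_mul (x / y) y (div_ne_zero hx hy) hy
  rw [div_mul_cancel₀ x hy] at h
  linarith

theorem val_eq_zero_of_pow_eq_one {x : K} {k : ℕ} (hk : k ≠ 0) (hx : x ^ k = 1) : v x = 0 := by
  have hx0 : x ≠ 0 := fun h => by simp [h, zero_pow hk] at hx
  have h := val_pow hv_mul hx0 k
  rw [hx, val_one hv_mul, eq_comm, mul_eq_zero] at h
  exact h.resolve_left (by exact_mod_cast hk)

theorem val_eq_div_of_pow_eq {x y : K} {k : ℕ} (hk : k ≠ 0) (hy : y ≠ 0) (hxy : x ^ k = y) :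
    v x = v y / k := by
  have hx : x ≠ 0 := fun hx => hy (by rw [← hxy, hx, zero_pow hk])
  rw [← hxy, val_pow hv_mul hx]
  field_simp

variable (hv_add : ∀ x y : K, x ≠ 0 → y ≠ 0 → x + y ≠ 0 → min (v x) (v y) ≤ v (x + y))
include hv_add

theorem IsPrimitiveRoot.val_geom_sum_nonneg {ξ : K} {k : ℕ} (hξ : IsPrimitiveRoot ξ k)
    {j : ℕ} (hj : 0 < j) (hjk : j < k) : 0 ≤ v (∑ i ∈ range j, ξ ^ i) := by
  have hξ0 : ξ ≠ 0 := hξ.ne_zero (by omega)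
  induction j with
  | zero => omega
  | succ j ih =>
    rcases Nat.eq_zero_or_pos j with rfl | hj
    · simp [val_one hv_mul]
    have hvξj : v (ξ ^ j) = 0 := val_eq_zero_of_pow_eq_one hv_mul (k := k) (by omega)
      (by rw [← pow_mul, mul_comm, pow_mul, hξ.pow_eq_one, one_pow])
    have hsum := hv_add _ _ (hξ.geom_sum_ne_zero hj (by omega)) (pow_ne_zero j hξ0)
      (by rw [← sum_range_succ]; exact hξ.geom_sum_ne_zero (by omega) hjk)
    rw [sum_range_succ]
    exact (le_min (ih hj (by omega)) hvξj.ge).trans hsum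

theorem IsPrimitiveRoot.val_one_sub_le {ξ : K} {k : ℕ} (hξ : IsPrimitiveRoot ξ k)
    {j : ℕ} (hj : 0 < j) (hjk : j < k) : v (1 - ξ) ≤ v (1 - ξ ^ j) := by
  have hgeom := hξ.val_geom_sum_nonneg hv_mul hv_add hj hjk
  rw [← mul_neg_geom_sum, hv_mul _ _ (sub_ne_zero.mpr (hξ.ne_one (by omega)).symm)
    (hξ.geom_sum_ne_zero hj hjk)]
  linarith

theorem IsPrimitiveRoot.val_one_sub_pow {ζ : K} {k : ℕ} (hζ : IsPrimitiveRoot ζ k)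
    {j : ℕ} (hj : 0 < j) (hjk : j < k) (hcop : j.Coprime k) :
    v (1 - ζ ^ j) = v (1 - ζ) := by
  have : NeZero k := ⟨by omega⟩
  obtain ⟨m, hmk, hm⟩ := (hζ.pow_of_coprime j hcop).eq_pow_of_pow_eq_one hζ.pow_eq_one
  have hm0 : 0 < m := Nat.pos_of_ne_zero fun h => hζ.ne_one (by omega) (by simpa [h] using hm.symm)
  have hle := (hζ.pow_of_coprime j hcop).val_one_sub_le hv_mul hv_add hm0 hmk
  rw [hm] at hle
  exact (le_antisymm (hζ.val_one_sub_le hv_mul hv_add hj hjk) hle).symm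

theorem IsPrimitiveRoot.val_one_sub_of_prime {ζ : K} {p : ℕ} (hp : p.Prime)
    (hζ : IsPrimitiveRoot ζ p) : v (1 - ζ) = v p / (p - 1) := by
  obtain ⟨q, rfl⟩ : ∃ q, p = q + 1 := ⟨p - 1, by have := hp.one_lt; omega⟩
  have hq : (q : ℚ) ≠ 0 := by have := hp.one_lt; norm_cast; omega
  have hlt {k} (hk : k ∈ range q) : k + 1 < q + 1 := by simpa using mem_range.mp hk
  have hne k (hk : k ∈ range q) : 1 - ζ ^ (k + 1) ≠ 0 :=
    sub_ne_zero.mpr (hζ.pow_ne_one_of_pos_of_lt k.succ_ne_zero (hlt hk)).symm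
  have hsame k (hk : k ∈ range q) : v (1 - ζ ^ (k + 1)) = v (1 - ζ) :=
    hζ.val_one_sub_pow hv_mul hv_add k.succ_pos (hlt hk)
      (Nat.coprime_comm.mp (Nat.coprime_of_lt_prime k.succ_ne_zero (hlt hk) hp))
  have hsum := val_prod hv_mul _ hne
  rw [hζ.prod_one_sub_pow_eq_order, sum_congr rfl hsame, sum_const, card_range,
    nsmul_eq_mul] at hsum
  push_cast at hsum ⊢
  rw [hsum, add_sub_cancel_right, mul_div_cancel_left₀ _ hq]

end Valuation

theorem pow_pow_eq_of_pow_succ_eq {M : Type*} [Monoid M] {p : ℕ} {ρ : ℕ → M}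
    (hρ : ∀ i, ρ (i + 1) ^ p = ρ i) (i : ℕ) : ρ i ^ p ^ i = ρ 0 := by
  induction i with
  | zero => simp
  | succ i ih => rw [pow_succ, pow_mul', ← ih, ← hρ i]

theorem inv_sub_one_sub_sum_Icc_inv_pow {q : ℚ} (hq : q ≠ 0) (hq1 : q ≠ 1) (n : ℕ) :
    1 / (q - 1) - ∑ i ∈ Icc 1 n, 1 / q ^ i = 1 / (q ^ n * (q - 1)) := by
  have hq1' : q - 1 ≠ 0 := sub_ne_zero.mpr hq1
  induction n with
  | zero => simp
  | succ n ih =>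
    rw [sum_Icc_succ_top (by omega), ← sub_sub, ih]
    field_simp
    ring

theorem stmt13_general (p : ℕ) [hp : Fact p.Prime] (n : ℕ)
    (K : Type*) [Field K] [Algebra ℚ_[p] K]
    (v : K → ℚ)
    (hv_mul : ∀ x y : K, x ≠ 0 → y ≠ 0 → v (x * y) = v x + v y)
    (hv_add : ∀ x y : K, x ≠ 0 → y ≠ 0 → x + y ≠ 0 → min (v x) (v y) ≤ v (x + y))
    (hv_base : ∀ x : ℚ_[p], x ≠ 0 → v (algebraMap ℚ_[p] K x) = x.valuation)
    (ζ : K) (hζ : IsPrimitiveRoot ζ p)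
    (ρ : ℕ → K) (hρ0 : ρ 0 = (p : K)) (hρ : ∀ i, ρ (i + 1) ^ p = ρ i) :
    v ((1 - ζ) / ∏ i ∈ Finset.Icc 1 n, ρ i) = 1 / ((p : ℚ) ^ n * ((p : ℚ) - 1)) := by
  have hp0 : (p : ℚ_[p]) ≠ 0 := by exact_mod_cast hp.out.ne_zero
  have hpK : (p : K) = algebraMap ℚ_[p] K p := (map_natCast _ p).symm
  have hpK0 : (p : K) ≠ 0 := by rw [hpK]; exact (map_ne_zero _).mpr hp0
  have hvp : v p = 1 := by rw [hpK, hv_base _ hp0, Padic.valuation_p]; rfl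
  have hρ_pow i : ρ i ^ p ^ i = p := hρ0 ▸ pow_pow_eq_of_pow_succ_eq hρ i
  have hρ_ne_zero i : ρ i ≠ 0 := fun h => hpK0 <| by
    rw [← hρ_pow i, h, zero_pow (pow_ne_zero _ hp.out.ne_zero)]
  have hvρ i : v (ρ i) = 1 / (p : ℚ) ^ i := by
    rw [val_eq_div_of_pow_eq hv_mul (pow_ne_zero _ hp.out.ne_zero) hpK0 (hρ_pow i), hvp]
    push_cast; rfl
  rw [val_div hv_mul (sub_ne_zero.mpr (hζ.ne_one hp.out.one_lt).symm)
      (prod_ne_zero_iff.mpr fun i _ => hρ_ne_zero i),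
    hζ.val_one_sub_of_prime hv_mul hv_add hp.out, hvp, val_prod hv_mul _ fun i _ => hρ_ne_zero i,
    sum_congr rfl fun i _ => hvρ i]
  exact inv_sub_one_sub_sum_Icc_inv_pow (by exact_mod_cast hp.out.ne_zero)
    (by exact_mod_cast hp.out.one_lt.ne') n

/-- For a prime `p`, `n ≥ 1`, a primitive `p`-th root of unity `ζ_p`, and compatible
`p^i`-th roots `p^{1/p^i}` of `p`, the `p`-adic valuation (normalized by `ord_p p = 1`)
of `(1 - ζ_p)/(p^{1/p} ⋯ p^{1/p^n})` equals `1/(p^n (p-1))`; in particular this element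
is a uniformizer of `ℚ_p(ζ_p, p^{1/p^n})`. -/
theorem stmt13 (p : ℕ) [hp : Fact p.Prime] (n : ℕ) (hn : 1 ≤ n)
    (K : Type*) [Field K] [Algebra ℚ_[p] K] [IsAlgClosure ℚ_[p] K]
    (v : K → ℚ)
    (hv_mul : ∀ x y : K, x ≠ 0 → y ≠ 0 → v (x * y) = v x + v y)
    (hv_add : ∀ x y : K, x ≠ 0 → y ≠ 0 → x + y ≠ 0 → min (v x) (v y) ≤ v (x + y))
    (hv_base : ∀ x : ℚ_[p], x ≠ 0 → v (algebraMap ℚ_[p] K x) = x.valuation)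
    (ζ : K) (hζ : IsPrimitiveRoot ζ p)
    (ρ : ℕ → K) (hρ0 : ρ 0 = (p : K)) (hρ : ∀ i, ρ (i + 1) ^ p = ρ i) :
    v ((1 - ζ) / ∏ i ∈ Finset.Icc 1 n, ρ i) = 1 / ((p : ℚ) ^ n * ((p : ℚ) - 1)) :=
  stmt13_general p (hp := hp) n K v hv_mul hv_add hv_base ζ hζ ρ hρ0 hρ
end

section
/- For p = 3 and π = ζ_9 − 1, the element π^{−3}(3^{1/3} + π^2 + 2π^3) has 3-adic valuation 1/18 and hence is a uniformizer of ℚ_3(ζ_9, 3^{1/3}). -/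
/-!
Write `π = ζ - 1`. Since `π` is a root of the Eisenstein polynomial `Φ₉(X + 1)` of degree
`φ(9) = 6`, `v π = 1/6`. Put `q = π² + 2π³`, so `v q = 1/3`, and `x = ρ + q`. From `ρ³ = 3`,
`x³ = 3ρq · x + (3 + q³)`. Reducing `3 + q³` modulo `Φ₉(π + 1)` leaves an integer polynomial
in `π` whose term `-429π⁴` has strictly the least valuation, so `v (3 + q³) = 5/3 = v (3ρq)`.
The Newton polygon of `X³ - 3ρq X - (3 + q³)` is then a single segment of slope `-5/9`, so
`v x = 5/9` and `v (π⁻³ x) = -1/2 + 5/9 = 1/18`.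
-/

open Polynomial

namespace Polynomial.IsEisensteinAt

theorem coeff_zero_ne_zero {R : Type*} [CommSemiring R] {𝓟 : Ideal R} {f : R[X]}
    (hf : f.IsEisensteinAt 𝓟) : f.coeff 0 ≠ 0 :=
  fun h => hf.notMem (h ▸ Submodule.zero_mem _)

theorem leadingCoeff_ne_zero {R : Type*} [CommSemiring R] {𝓟 : Ideal R} {f : R[X]}
    (hf : f.IsEisensteinAt 𝓟) : f.leadingCoeff ≠ 0 :=
  fun h => hf.leading (h ▸ Submodule.zero_mem _)

variable {p : ℕ} {f : ℤ[X]}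

theorem one_le_padicValInt_coeff [Fact p.Prime] (hf : f.IsEisensteinAt (Ideal.span {(p : ℤ)}))
    {k : ℕ} (hk : k ≠ f.natDegree) (hck : f.coeff k ≠ 0) : 1 ≤ padicValInt p (f.coeff k) :=
  ((padicValInt_dvd_iff 1 _).mp (by simpa using Ideal.mem_span_singleton.mp (hf.coeff_mem hk)))
    |>.resolve_left hck

theorem padicValInt_coeff_zero [Fact p.Prime] (hf : f.IsEisensteinAt (Ideal.span {(p : ℤ)}))
    (hdeg : 0 < f.natDegree) : padicValInt p (f.coeff 0) = 1 := by
  have hp2 : ¬ (p : ℤ) ^ 2 ∣ f.coeff 0 := by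
    rw [← Ideal.mem_span_singleton, ← Ideal.span_singleton_pow]
    exact hf.notMem
  have hlt := mt (padicValInt_dvd_iff 2 (f.coeff 0)).mpr hp2
  rw [not_or, not_le] at hlt
  have := hf.one_le_padicValInt_coeff hdeg.ne hf.coeff_zero_ne_zero
  omega

theorem padicValInt_leadingCoeff (hf : f.IsEisensteinAt (Ideal.span {(p : ℤ)})) :
    padicValInt p f.leadingCoeff = 0 :=
  padicValInt.eq_zero_of_not_dvd (mt Ideal.mem_span_singleton.mpr hf.leading)

end Polynomial.IsEisensteinAt

structure IsAddValuationOnUnits {K : Type*} [Field K] (v : K → ℚ) : Prop where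
  map_mul : ∀ x y : K, x ≠ 0 → y ≠ 0 → v (x * y) = v x + v y
  min_le_map_add : ∀ x y : K, x ≠ 0 → y ≠ 0 → x + y ≠ 0 → min (v x) (v y) ≤ v (x + y)

namespace IsAddValuationOnUnits

variable {K : Type*} [Field K] {v : K → ℚ}

theorem map_one (hv : IsAddValuationOnUnits v) : v 1 = 0 := by
  have := hv.map_mul 1 1 one_ne_zero one_ne_zero
  rw [mul_one] at this
  linarith

theorem map_neg (hv : IsAddValuationOnUnits v) {x : K} (hx : x ≠ 0) : v (-x) = v x := by
  have h1 : v (-1) = 0 := by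
    have := hv.map_mul (-1) (-1) (by norm_num) (by norm_num)
    rw [neg_one_mul, neg_neg, hv.map_one] at this
    linarith
  rw [← neg_one_mul, hv.map_mul _ _ (by norm_num) hx, h1, zero_add]

theorem map_pow (hv : IsAddValuationOnUnits v) {x : K} (hx : x ≠ 0) (n : ℕ) :
    v (x ^ n) = n * v x := by
  induction n with
  | zero => simp [hv.map_one]
  | succ n ih =>
    rw [pow_succ, hv.map_mul _ _ (pow_ne_zero n hx) hx, ih]
    push_cast
    ring

theorem map_inv (hv : IsAddValuationOnUnits v) {x : K} (hx : x ≠ 0) : v x⁻¹ = -v x := by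
  have := hv.map_mul _ _ hx (inv_ne_zero hx)
  rw [mul_inv_cancel₀ hx, hv.map_one] at this
  linarith

theorem map_zpow (hv : IsAddValuationOnUnits v) {x : K} (hx : x ≠ 0) (n : ℤ) :
    v (x ^ n) = n * v x := by
  obtain ⟨n, rfl | rfl⟩ := n.eq_nat_or_neg
  · simpa using hv.map_pow hx n
  · rw [zpow_neg, zpow_natCast, hv.map_inv (pow_ne_zero n hx), hv.map_pow hx]
    push_cast
    ring

theorem lt_map_add (hv : IsAddValuationOnUnits v) {c : ℚ} {x y : K} (hx : x ≠ 0 → c < v x)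
    (hy : y ≠ 0 → c < v y) (hxy : x + y ≠ 0) : c < v (x + y) := by
  rcases eq_or_ne x 0 with rfl | hx0
  · simpa using hy (by simpa using hxy)
  rcases eq_or_ne y 0 with rfl | hy0
  · simpa using hx hx0
  exact (lt_min (hx hx0) (hy hy0)).trans_le (hv.min_le_map_add x y hx0 hy0 hxy)

theorem lt_map_sum (hv : IsAddValuationOnUnits v) {ι : Type*} {s : Finset ι} {f : ι → K}
    {c : ℚ} (hf : ∀ i ∈ s, f i ≠ 0 → c < v (f i)) (hs : ∑ i ∈ s, f i ≠ 0) :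
    c < v (∑ i ∈ s, f i) := by
  induction s using Finset.cons_induction with
  | empty => simp at hs
  | cons i s hi ih =>
    rw [Finset.sum_cons] at hs ⊢
    exact hv.lt_map_add (hf i (Finset.mem_cons_self i s))
      (fun h => ih (fun j hj => hf j (Finset.mem_cons_of_mem hj)) h) hs

theorem add_ne_zero_of_lt (hv : IsAddValuationOnUnits v) {x y : K} (hx : x ≠ 0)
    (h : y ≠ 0 → v x < v y) : x + y ≠ 0 := by
  intro hxy
  have hy : y = -x := eq_neg_of_add_eq_zero_right hxy
  have := h (hy ▸ neg_ne_zero.mpr hx)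
  rw [hy, hv.map_neg hx] at this
  exact lt_irrefl _ this

theorem map_add_eq_of_lt (hv : IsAddValuationOnUnits v) {x y : K} (hx : x ≠ 0)
    (h : y ≠ 0 → v x < v y) : v (x + y) = v x := by
  rcases eq_or_ne y 0 with rfl | hy
  · rw [add_zero]
  have hxy := hv.add_ne_zero_of_lt hx h
  have hle := hv.min_le_map_add x y hx hy hxy
  rw [min_eq_left (h hy).le] at hle
  have hge := hv.min_le_map_add (x + y) (-y) hxy (neg_ne_zero.mpr hy) (by simpa using hx)
  rw [add_neg_cancel_right, hv.map_neg hy] at hge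
  rcases min_choice (v (x + y)) (v y) with hmin | hmin <;> rw [hmin] at hge
  · linarith
  · linarith [h hy]

theorem sum_ne_zero_of_lt (hv : IsAddValuationOnUnits v) {ι : Type*} [DecidableEq ι]
    {s : Finset ι} {f : ι → K} {j : ι} (hj : j ∈ s) (hfj : f j ≠ 0)
    (hf : ∀ i ∈ s, i ≠ j → f i ≠ 0 → v (f j) < v (f i)) : ∑ i ∈ s, f i ≠ 0 := by
  rw [← Finset.add_sum_erase s f hj]
  refine hv.add_ne_zero_of_lt hfj fun h => hv.lt_map_sum (fun i hi => ?_) h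
  exact hf i (Finset.mem_of_mem_erase hi) (Finset.ne_of_mem_erase hi)

theorem map_sum_eq_of_lt (hv : IsAddValuationOnUnits v) {ι : Type*} [DecidableEq ι]
    {s : Finset ι} {f : ι → K} {j : ι} (hj : j ∈ s) (hfj : f j ≠ 0)
    (hf : ∀ i ∈ s, i ≠ j → f i ≠ 0 → v (f j) < v (f i)) : v (∑ i ∈ s, f i) = v (f j) := by
  rw [← Finset.add_sum_erase s f hj]
  refine hv.map_add_eq_of_lt hfj fun h => hv.lt_map_sum (fun i hi => ?_) h
  exact hf i (Finset.mem_of_mem_erase hi) (Finset.ne_of_mem_erase hi)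

/-- If every point `(k, v (f.coeff k))` lies on or above the segment of slope `-s` from
`(0, v (f.coeff 0))` to `(f.natDegree, v f.leadingCoeff)`, every root of `f` has valuation `s`. -/
theorem map_eq_of_isRoot (hv : IsAddValuationOnUnits v) {f : K[X]} {s : ℚ}
    (h0 : f.coeff 0 ≠ 0) (hdeg : 0 < f.natDegree)
    (hlead : v f.leadingCoeff = v (f.coeff 0) - f.natDegree * s)
    (habove : ∀ k, f.coeff k ≠ 0 → v (f.coeff 0) - k * s ≤ v (f.coeff k))
    {x : K} (hx : f.IsRoot x) : v x = s := by
  have hx0 : x ≠ 0 := by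
    rintro rfl
    exact h0 (by rwa [coeff_zero_eq_eval_zero])
  have hterm : ∀ k, f.coeff k ≠ 0 → v (f.coeff k * x ^ k) = v (f.coeff k) + k * v x :=
    fun k hk => by rw [hv.map_mul _ _ hk (pow_ne_zero k hx0), hv.map_pow hx0]
  have hlc : f.leadingCoeff ≠ 0 := leadingCoeff_ne_zero.mpr (ne_zero_of_natDegree_gt hdeg)
  rw [leadingCoeff] at hlc hlead
  rw [IsRoot, eval_eq_sum_range] at hx
  by_contra hne
  rcases lt_or_gt_of_ne hne with hlt | hgt
  · refine hv.sum_ne_zero_of_lt (Finset.self_mem_range_succ _)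
      (mul_ne_zero hlc (pow_ne_zero _ hx0)) (fun k hk hkn hck => ?_) hx
    replace hck := left_ne_zero_of_mul hck
    have hkn : (k : ℚ) < f.natDegree := by
      exact_mod_cast (Finset.mem_range_succ_iff.mp hk).lt_of_ne hkn
    rw [hterm _ hlc, hterm _ hck, hlead]
    nlinarith [habove k hck, mul_pos (sub_pos.mpr hkn) (sub_pos.mpr hlt)]
  · refine hv.sum_ne_zero_of_lt (Finset.mem_range.mpr f.natDegree.succ_pos)
      (by simpa using h0) (fun k _ hk hck => ?_) hx
    replace hck := left_ne_zero_of_mul hck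
    have hk : (0 : ℚ) < k := by exact_mod_cast Nat.pos_of_ne_zero hk
    rw [hterm _ h0, hterm _ hck, Nat.cast_zero, zero_mul, add_zero]
    nlinarith [habove k hck, mul_pos hk (sub_pos.mpr hgt)]

theorem map_eq_inv_natDegree_of_isEisensteinAt [CharZero K] (hv : IsAddValuationOnUnits v)
    {p : ℕ} [Fact p.Prime] (hvℤ : ∀ c : ℤ, c ≠ 0 → v c = padicValInt p c) {f : ℤ[X]}
    (hf : f.IsEisensteinAt (Ideal.span {(p : ℤ)})) (hdeg : 0 < f.natDegree) {x : K}
    (hx : aeval x f = 0) : v x = 1 / f.natDegree := by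
  have hinj : Function.Injective (algebraMap ℤ K) := RingHom.injective_int _
  have hcoeff (k : ℕ) : (f.map (algebraMap ℤ K)).coeff k = f.coeff k := by simp
  have hnat := natDegree_map_eq_of_injective hinj f
  have hc0 := hf.coeff_zero_ne_zero
  have hv0 : v (f.coeff 0) = 1 := by
    rw [hvℤ _ hc0, hf.padicValInt_coeff_zero hdeg, Nat.cast_one]
  have hvlead : v f.leadingCoeff = 0 := by
    rw [hvℤ _ hf.leadingCoeff_ne_zero, hf.padicValInt_leadingCoeff, Nat.cast_zero]
  refine hv.map_eq_of_isRoot (f := f.map (algebraMap ℤ K)) ?_ (hnat ▸ hdeg) ?_ ?_ ?_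
  · rw [hcoeff]
    exact_mod_cast hc0
  · rw [leadingCoeff_map_of_injective hinj, hcoeff, hnat, algebraMap_int_eq, eq_intCast,
      hvlead, hv0]
    field_simp
    ring
  · intro k hk
    rw [hcoeff] at hk
    rw [hcoeff, hcoeff, hv0]
    have hck : f.coeff k ≠ 0 := by exact_mod_cast hk
    by_cases hkn : k = f.natDegree
    · rw [hkn, ← leadingCoeff, hvlead]
      field_simp
      simp
    · have h1 : (1 : ℚ) ≤ padicValInt p (f.coeff k) := by
        exact_mod_cast hf.one_le_padicValInt_coeff hkn hck
      have : (0 : ℚ) ≤ k * (1 / f.natDegree) := by positivity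
      rw [hvℤ _ hck]
      linarith
  · rwa [IsRoot, eval_map_algebraMap]

theorem map_sub_one_of_isPrimitiveRoot [CharZero K] (hv : IsAddValuationOnUnits v) {p : ℕ}
    [Fact p.Prime] (hvℤ : ∀ c : ℤ, c ≠ 0 → v c = padicValInt p c) {n : ℕ} {ζ : K}
    (hζ : IsPrimitiveRoot ζ (p ^ (n + 1))) : v (ζ - 1) = 1 / (p ^ (n + 1)).totient := by
  have hdeg : ((cyclotomic (p ^ (n + 1)) ℤ).comp (X + 1)).natDegree = (p ^ (n + 1)).totient := by
    rw [natDegree_comp, natDegree_cyclotomic, ← C_1, natDegree_X_add_C, mul_one]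
  rw [← hdeg]
  refine hv.map_eq_inv_natDegree_of_isEisensteinAt hvℤ
    (cyclotomic_prime_pow_comp_X_add_one_isEisensteinAt p n) ?_ ?_
  · rw [hdeg]
    exact Nat.totient_pos.mpr (pow_pos (Fact.out : p.Prime).pos _)
  · have := hζ.isRoot_cyclotomic (pow_pos (Fact.out : p.Prime).pos _)
    rwa [aeval_comp, map_add, aeval_X, _root_.map_one, sub_add_cancel, aeval_def,
      eval₂_eq_eval_map, map_cyclotomic]

theorem map_eq_of_pow_eq_mul_add (hv : IsAddValuationOnUnits v) {n : ℕ} (hn : 2 ≤ n)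
    {a b x : K} (hb : b ≠ 0) (ha : a ≠ 0 → (n - 1) * v b ≤ n * v a)
    (hx : x ^ n = a * x + b) : v x = v b / n := by
  set f : K[X] := X ^ n - (C a * X + C b)
  have hlin : (C a * X + C b).natDegree < n := (natDegree_linear_le).trans_lt (by omega)
  have hdeg : f.natDegree = n := by
    rw [natDegree_sub_eq_left_of_natDegree_lt (by rwa [natDegree_X_pow]), natDegree_X_pow]
  have hlead : f.leadingCoeff = 1 :=
    monic_X_pow_sub ((degree_le_natDegree).trans_lt (by exact_mod_cast hlin))
  have hcoeff (k : ℕ) : f.coeff k =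
      (if k = n then 1 else 0) - ((if k = 1 then a else 0) + if k = 0 then b else 0) := by
    simp only [f, coeff_sub, coeff_add, coeff_X_pow, coeff_C_mul_X, coeff_C]
  have hc0 : f.coeff 0 = -b := by simp [hcoeff, show 0 ≠ n by omega]
  have hn0 : (n : ℚ) ≠ 0 := by positivity
  refine hv.map_eq_of_isRoot (by rwa [hc0, neg_ne_zero]) (by omega) ?_ ?_ ?_
  · rw [hlead, hc0, hdeg, hv.map_one, hv.map_neg hb]
    field_simp
    ring
  · intro k hk
    rw [hcoeff] at hk
    rw [hc0, hv.map_neg hb, hcoeff]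
    rcases eq_or_ne k n with rfl | hkn
    · simp [show k ≠ 1 by omega, show k ≠ 0 by omega, hv.map_one, field]
    rcases eq_or_ne k 1 with rfl | hk1
    · have ha0 : a ≠ 0 := by simpa [hkn] using hk
      have := ha ha0
      simp only [hkn, if_false, if_true, one_ne_zero, zero_sub, add_zero, hv.map_neg ha0,
        Nat.cast_one, one_mul, sub_le_iff_le_add]
      field_simp
      linarith
    rcases eq_or_ne k 0 with rfl | hk0
    · simp [show 0 ≠ n by omega, hv.map_neg hb]
    · simp [hkn, hk1, hk0] at hk
  · simp [IsRoot, f, hx]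

theorem map_sum_intCast_mul_pow [CharZero K] (hv : IsAddValuationOnUnits v) {p : ℕ}
    (hvℤ : ∀ c : ℤ, c ≠ 0 → v c = padicValInt p c) {π : K} (hπ0 : π ≠ 0) {e : ℕ} (he : 0 < e)
    (hπ : v π = 1 / e) {n : ℕ} {c : Fin n → ℤ} {j : Fin n} (hcj : c j ≠ 0)
    (hdom : ∀ i ≠ j, c i ≠ 0 → e * padicValInt p (c j) + j < e * padicValInt p (c i) + i) :
    ∑ i, (c i : K) * π ^ (i : ℕ) ≠ 0 ∧
      v (∑ i, (c i : K) * π ^ (i : ℕ)) = padicValInt p (c j) + (j : ℕ) / e := by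
  have hterm (i : Fin n) (hi : c i ≠ 0) :
      v ((c i : K) * π ^ (i : ℕ)) = padicValInt p (c i) + (i : ℕ) / e := by
    rw [hv.map_mul _ _ (Int.cast_ne_zero.mpr hi) (pow_ne_zero _ hπ0), hvℤ _ hi,
      hv.map_pow hπ0, hπ, mul_one_div]
  have hfj : (c j : K) * π ^ (j : ℕ) ≠ 0 :=
    mul_ne_zero (Int.cast_ne_zero.mpr hcj) (pow_ne_zero _ hπ0)
  have hlt : ∀ i ∈ Finset.univ, i ≠ j → (c i : K) * π ^ (i : ℕ) ≠ 0 →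
      v ((c j : K) * π ^ (j : ℕ)) < v ((c i : K) * π ^ (i : ℕ)) := by
    intro i _ hij hi
    have hci : c i ≠ 0 := Int.cast_ne_zero.mp (left_ne_zero_of_mul hi)
    have hd : (e * padicValInt p (c j) + j : ℚ) < e * padicValInt p (c i) + i := by
      exact_mod_cast hdom i hij hci
    rw [hterm j hcj, hterm i hci]
    have he' : (0 : ℚ) < e := by exact_mod_cast he
    rw [← mul_lt_mul_iff_of_pos_left he']
    field_simp
    linarith
  exact ⟨hv.sum_ne_zero_of_lt (Finset.mem_univ j) hfj hlt,
    (hv.map_sum_eq_of_lt (Finset.mem_univ j) hfj hlt).trans (hterm j hcj)⟩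

theorem map_three_add_cube [CharZero K] (hv : IsAddValuationOnUnits v)
    (hvℤ : ∀ c : ℤ, c ≠ 0 → v c = padicValInt 3 c) {ζ : K} (hζ : IsPrimitiveRoot ζ 9)
    (hπ : v (ζ - 1) = 1 / 6) :
    3 + ((ζ - 1) ^ 2 + 2 * (ζ - 1) ^ 3) ^ 3 ≠ 0 ∧
      v (3 + ((ζ - 1) ^ 2 + 2 * (ζ - 1) ^ 3) ^ 3) = 5 / 3 := by
  have hΦ : ζ ^ 6 + ζ ^ 3 + 1 = 0 := by
    have := hζ.isRoot_cyclotomic (by norm_num)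
    rw [show 9 = 3 ^ (1 + 1) from rfl, cyclotomic_prime_pow_eq_geom_sum Nat.prime_three] at this
    simp [Finset.sum_range_succ] at this
    linear_combination this
  -- the coefficients of `3 + X⁶ (1 + 2X)³ - (1 + 2X)³ Φ₉(X + 1)`
  let c : Fin 9 → ℤ := ![0, -27, -108, -261, -429, -492, -384, -192, -48]
  have hsum :
      3 + ((ζ - 1) ^ 2 + 2 * (ζ - 1) ^ 3) ^ 3 = ∑ i, (c i : K) * (ζ - 1) ^ (i : ℕ) := by
    simp [c, Fin.sum_univ_succ]
    linear_combination (1 + 2 * (ζ - 1)) ^ 3 * hΦ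
  have hπ0 : ζ - 1 ≠ 0 := sub_ne_zero.mpr (hζ.ne_one (by norm_num))
  obtain ⟨hne, hval⟩ := hv.map_sum_intCast_mul_pow hvℤ hπ0 (e := 6) (c := c) (j := 4)
    (by norm_num) (by simpa using hπ) (by decide) (by decide +kernel)
  have hc4 : padicValInt 3 (c 4) = 1 := by decide +kernel
  rw [hsum, hval, hc4]
  exact ⟨hne, by norm_num⟩

theorem map_sq_add_two_mul_cube [CharZero K] (hv : IsAddValuationOnUnits v)
    (h2 : v (2 : K) = 0) {π : K} (hπ0 : π ≠ 0) (hπ : 0 < v π) :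
    π ^ 2 + 2 * π ^ 3 ≠ 0 ∧ v (π ^ 2 + 2 * π ^ 3) = 2 * v π := by
  have hunit : 2 * π ≠ 0 → v 1 < v (2 * π) := fun _ => by
    rw [hv.map_mul _ _ two_ne_zero hπ0, h2, hv.map_one]
    linarith
  have h1 : 1 + 2 * π ≠ 0 := hv.add_ne_zero_of_lt one_ne_zero hunit
  rw [show π ^ 2 + 2 * π ^ 3 = π ^ 2 * (1 + 2 * π) by ring]
  refine ⟨mul_ne_zero (pow_ne_zero 2 hπ0) h1, ?_⟩
  rw [hv.map_mul _ _ (pow_ne_zero 2 hπ0) h1, hv.map_pow hπ0,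
    hv.map_add_eq_of_lt one_ne_zero hunit, hv.map_one]
  push_cast
  ring

theorem map_add_of_pow_three_eq_three [CharZero K] (hv : IsAddValuationOnUnits v)
    (h3 : v (3 : K) = 1) {ρ q : K} (hρ : ρ ^ 3 = 3) (hq : v q = 1 / 3) (hb : 3 + q ^ 3 ≠ 0)
    (hvb : 2 * v (3 + q ^ 3) ≤ 5) : ρ + q ≠ 0 ∧ v (ρ + q) = v (3 + q ^ 3) / 3 := by
  have hρ0 : ρ ≠ 0 := by
    rintro rfl
    exact three_ne_zero (by simpa using hρ.symm)
  have hvρ : v ρ = 1 / 3 := by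
    have := hv.map_pow hρ0 3
    rw [hρ, h3, Nat.cast_ofNat] at this
    linarith
  have hcubic : (ρ + q) ^ 3 = 3 * ρ * q * (ρ + q) + (3 + q ^ 3) := by linear_combination hρ
  refine ⟨fun h => hb (by simpa [h] using hcubic.symm), ?_⟩
  have hcoeff (ha : 3 * ρ * q ≠ 0) :
      ((3 : ℕ) - 1 : ℚ) * v (3 + q ^ 3) ≤ (3 : ℕ) * v (3 * ρ * q) := by
    have hq0 : q ≠ 0 := right_ne_zero_of_mul ha
    rw [hv.map_mul _ _ (left_ne_zero_of_mul ha) hq0, hv.map_mul _ _ three_ne_zero hρ0, h3, hvρ,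
      hq]
    push_cast
    linarith
  exact_mod_cast hv.map_eq_of_pow_eq_mul_add (by norm_num) hb hcoeff hcubic

end IsAddValuationOnUnits

theorem stmt18_general
    (K : Type*) [Field K] [Algebra ℚ_[3] K]
    (v : K → ℚ)
    (hv_mul : ∀ x y : K, x ≠ 0 → y ≠ 0 → v (x * y) = v x + v y)
    (hv_add : ∀ x y : K, x ≠ 0 → y ≠ 0 → x + y ≠ 0 → min (v x) (v y) ≤ v (x + y))
    (hv_base : ∀ x : ℚ_[3], x ≠ 0 → v (algebraMap ℚ_[3] K x) = x.valuation)
    (ζ : K) (hζ : IsPrimitiveRoot ζ 9)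
    (ρ : K) (hρ : ρ ^ 3 = (3 : K)) :
    v ((ζ - 1) ^ (-3 : ℤ) * (ρ + (ζ - 1) ^ 2 + 2 * (ζ - 1) ^ 3)) = 1 / 18 := by
  have : CharZero K := charZero_of_injective_algebraMap (algebraMap ℚ_[3] K).injective
  have hv : IsAddValuationOnUnits v := ⟨hv_mul, hv_add⟩
  have hvℤ (c : ℤ) (hc : c ≠ 0) : v c = padicValInt 3 c := by
    simpa using hv_base c (Int.cast_ne_zero.mpr hc)
  have h2 : v (2 : K) = 0 := by
    simpa [show padicValInt 3 2 = 0 by decide +kernel] using hvℤ 2 two_ne_zero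
  have h3 : v (3 : K) = 1 := by
    simpa [show padicValInt 3 3 = 1 by decide +kernel] using hvℤ 3 three_ne_zero
  have hπ0 : ζ - 1 ≠ 0 := sub_ne_zero.mpr (hζ.ne_one (by norm_num))
  have hπ : v (ζ - 1) = 1 / 6 := by
    have := hv.map_sub_one_of_isPrimitiveRoot hvℤ (n := 1) hζ
    rwa [Nat.totient_prime_pow_succ Nat.prime_three] at this
  obtain ⟨-, hvq⟩ := hv.map_sq_add_two_mul_cube h2 hπ0 (by rw [hπ]; norm_num)
  obtain ⟨hb, hvb⟩ := hv.map_three_add_cube hvℤ hζ hπ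
  obtain ⟨hx0, hx⟩ := hv.map_add_of_pow_three_eq_three h3 hρ (by rw [hvq, hπ]; norm_num) hb
    (by rw [hvb]; norm_num)
  rw [add_assoc, hv.map_mul _ _ (zpow_ne_zero _ hπ0) hx0, hv.map_zpow hπ0, hπ, hx, hvb]
  norm_num

/-- For `p = 3` and `π = ζ_9 - 1`, the element `π^{-3}(3^{1/3} + π² + 2π³)` has
`3`-adic valuation `1/18` and hence is a uniformizer of `ℚ_3(ζ_9, 3^{1/3})`. -/
theorem stmt18
    (K : Type*) [Field K] [Algebra ℚ_[3] K] [IsAlgClosure ℚ_[3] K]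
    (v : K → ℚ)
    (hv_mul : ∀ x y : K, x ≠ 0 → y ≠ 0 → v (x * y) = v x + v y)
    (hv_add : ∀ x y : K, x ≠ 0 → y ≠ 0 → x + y ≠ 0 → min (v x) (v y) ≤ v (x + y))
    (hv_base : ∀ x : ℚ_[3], x ≠ 0 → v (algebraMap ℚ_[3] K x) = x.valuation)
    (ζ : K) (hζ : IsPrimitiveRoot ζ 9)
    (ρ : K) (hρ : ρ ^ 3 = (3 : K)) :
    v ((ζ - 1) ^ (-3 : ℤ) * (ρ + (ζ - 1) ^ 2 + 2 * (ζ - 1) ^ 3)) = 1 / 18 :=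
  stmt18_general K v hv_mul hv_add hv_base ζ hζ ρ hρ
end
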